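/- arXiv:2206.11029 — 5 statements merged into one kernel-verified Lean document; each statement's English description precedes it below -/
import Mathlib

section
/- Let G_s be a connected simple graph on n ≥ 2 vertices with adjacency matrix A_s and G_b a connected simple graph on m ≥ 2 vertices with adjacency matrix A_b. Set N = nm, A_c = A_s ⊗ I_m (the colonisation network of the separated-effect submodel) and A_e = I_n ⊗ A_b (its extinction network), and for each index v set M_v = 1 + Σ_u (A_e)_{vu}. Define g : (0,1)^N → ℝ^N by g_v(p) = (A_c p)_v / (1 − (A_e p)_v / M_v). Then g is well defined (the denominator is strictly positive on (0,1)^N), and for every p ∈ (0,1)^N and all indices u, v, the partial derivative ∂g_v/∂p_u(p) is strictly positive if (A_c)_{vu} = 1 or (A_e)_{vu} = 1, and equals zero otherwise. Consequently the matrix J with J_{vu} = 1 iff ∂g_v/∂p_u > 0 on (0,1)^N is the adjacency matrix of the box product G_s □ G_b and is irreducible. -/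
/-!
The map `g` is a quotient of two affine functions of `p`, so its partial derivative along `e_u`
is `(A_c[v,u] D + N A_e[v,u] / M_v) / D²` with `N = (A_c p)_v` and `D = 1 - (A_e p)_v / M_v`.
On the open cube `D > 0` because `(A_e p)_v < 1 + Σ_u (A_e)_{vu}`, and `N > 0` because every site
has a neighbour in the connected graph `G_s`; as all entries are `0` or `1`, the derivative is
positive exactly when `A_c[v,u] = 1` or `A_e[v,u] = 1`, i.e. when `v` and `u` are adjacent in
`G_s □ G_b`. That graph is connected with at least two vertices, so any two vertices are joined
by a walk of positive length, and `(J^k)_{uv}` counts the walks of length `k`.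
-/

open Kronecker Matrix

section LinearFractional

variable {ι : Type*} [Fintype ι] (A B : Matrix ι ι ℝ) (μ : ℝ) (v : ι)

theorem differentiable_mulVec_apply : Differentiable ℝ fun q : ι → ℝ => (A *ᵥ q) v :=
  (LinearMap.proj v ∘ₗ A.mulVecLin).toContinuousLinearMap.differentiable

theorem mulVec_add_smul_single_apply [DecidableEq ι] (p : ι → ℝ) (t : ℝ) (u : ι) :
    (A *ᵥ (p + t • Pi.single u 1)) v = (A *ᵥ p) v + t * A v u := by
  simp [mulVec_add, mulVec_smul]

theorem differentiableAt_mulVec_div_one_sub {p : ι → ℝ} (hp : 1 - (B *ᵥ p) v / μ ≠ 0) :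
    DifferentiableAt ℝ (fun q => (A *ᵥ q) v / (1 - (B *ᵥ q) v / μ)) p := by
  have := differentiable_mulVec_apply A v
  have := differentiable_mulVec_apply B v
  fun_prop (disch := exact hp)

theorem fderiv_mulVec_div_one_sub_single [DecidableEq ι] {p : ι → ℝ}
    (hp : 1 - (B *ᵥ p) v / μ ≠ 0) (u : ι) :
    fderiv ℝ (fun q => (A *ᵥ q) v / (1 - (B *ᵥ q) v / μ)) p (Pi.single u 1) =
      (A v u * (1 - (B *ᵥ p) v / μ) + (A *ᵥ p) v * (B v u / μ)) /
        (1 - (B *ᵥ p) v / μ) ^ 2 := by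
  rw [← (differentiableAt_mulVec_div_one_sub A B μ v hp).lineDeriv_eq_fderiv]
  refine HasLineDerivAt.lineDeriv ?_
  have hnum : HasDerivAt (fun t : ℝ => (A *ᵥ p) v + t * A v u) (A v u) 0 := by
    simpa using ((hasDerivAt_id (0 : ℝ)).mul_const (A v u)).const_add ((A *ᵥ p) v)
  have hden :
      HasDerivAt (fun t : ℝ => 1 - ((B *ᵥ p) v + t * B v u) / μ) (-(B v u / μ)) 0 := by
    simpa using (((hasDerivAt_id (0 : ℝ)).mul_const (B v u)).const_add
      ((B *ᵥ p) v)).div_const μ |>.const_sub 1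
  have h := hnum.fun_div hden (by simpa using hp)
  simp only [zero_mul, add_zero] at h
  unfold HasLineDerivAt
  simp only [mulVec_add_smul_single_apply]
  exact h.congr_deriv (by ring)

theorem fderiv_mulVec_div_one_sub_single_pos [DecidableEq ι] {p : ι → ℝ} {u : ι}
    (hμ : 0 < μ) (hD : 0 < 1 - (B *ᵥ p) v / μ) (hN : 0 < (A *ᵥ p) v)
    (hA : 0 ≤ A v u) (hB : 0 ≤ B v u) (h : 0 < A v u ∨ 0 < B v u) :
    0 < fderiv ℝ (fun q => (A *ᵥ q) v / (1 - (B *ᵥ q) v / μ)) p (Pi.single u 1) := by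
  rw [fderiv_mulVec_div_one_sub_single A B μ v hD.ne']
  refine div_pos ?_ (pow_pos hD 2)
  rcases h with hA_pos | hB_pos
  · exact add_pos_of_pos_of_nonneg (mul_pos hA_pos hD) (mul_nonneg hN.le (div_nonneg hB hμ.le))
  · exact add_pos_of_nonneg_of_pos (mul_nonneg hA hD.le) (mul_pos hN (div_pos hB_pos hμ))

theorem fderiv_mulVec_div_one_sub_single_eq_zero [DecidableEq ι] {p : ι → ℝ} {u : ι}
    (hD : 1 - (B *ᵥ p) v / μ ≠ 0) (hA : A v u = 0) (hB : B v u = 0) :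
    fderiv ℝ (fun q => (A *ᵥ q) v / (1 - (B *ᵥ q) v / μ)) p (Pi.single u 1) = 0 := by
  simp [fderiv_mulVec_div_one_sub_single A B μ v hD, hA, hB]

end LinearFractional

section Nonneg

variable {ι : Type*} [Fintype ι] {A B : Matrix ι ι ℝ} {v : ι} {p : ι → ℝ}

theorem mulVec_apply_le_sum_of_le_one (hB : ∀ w, 0 ≤ B v w) (hp : ∀ w, p w ≤ 1) :
    (B *ᵥ p) v ≤ ∑ w, B v w :=
  Finset.sum_le_sum fun w _ => mul_le_of_le_one_right (hB w) (hp w)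

theorem one_sub_mulVec_div_pos {μ : ℝ} (hB : ∀ w, 0 ≤ B v w) (hp : ∀ w, p w ≤ 1)
    (hμ : ∑ w, B v w < μ) : 0 < 1 - (B *ᵥ p) v / μ := by
  have hμ_pos : 0 < μ := (Finset.sum_nonneg fun w _ => hB w).trans_lt hμ
  rw [sub_pos, div_lt_one hμ_pos]
  exact (mulVec_apply_le_sum_of_le_one hB hp).trans_lt hμ

theorem mulVec_apply_pos (hA : ∀ w, 0 ≤ A v w) (hp : ∀ w, 0 < p w) {w : ι}
    (hw : 0 < A v w) : 0 < (A *ᵥ p) v :=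
  Finset.sum_pos' (fun x _ => mul_nonneg (hA x) (hp x).le)
    ⟨w, Finset.mem_univ w, mul_pos hw (hp w)⟩

end Nonneg

section ZeroOne

variable {ι : Type*} [Fintype ι] [DecidableEq ι] {A B : Matrix ι ι ℝ} {μ : ℝ} {v : ι}
  {p : ι → ℝ}

theorem fderiv_mulVec_div_one_sub_single_sign_of_zero_one
    (hA : ∀ w, A v w = 0 ∨ A v w = 1) (hB : ∀ w, B v w = 0 ∨ B v w = 1)
    (hrow : ∃ w, A v w = 1) (hμ : ∑ w, B v w < μ) (hp : ∀ w, p w ∈ Set.Ioo (0 : ℝ) 1)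
    (u : ι) :
    ((A v u = 1 ∨ B v u = 1) →
      0 < fderiv ℝ (fun q => (A *ᵥ q) v / (1 - (B *ᵥ q) v / μ)) p (Pi.single u 1)) ∧
    (¬ (A v u = 1 ∨ B v u = 1) →
      fderiv ℝ (fun q => (A *ᵥ q) v / (1 - (B *ᵥ q) v / μ)) p (Pi.single u 1) = 0) := by
  have nonneg {x : ℝ} (hx : x = 0 ∨ x = 1) : 0 ≤ x := by rcases hx with rfl | rfl <;> norm_num
  have hD := one_sub_mulVec_div_pos (fun w => nonneg (hB w)) (fun w => (hp w).2.le) hμ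
  refine ⟨fun h => ?_, fun h => ?_⟩
  · obtain ⟨w, hw⟩ := hrow
    have hμ_pos : 0 < μ := (Finset.sum_nonneg fun w _ => nonneg (hB w)).trans_lt hμ
    have hN : 0 < (A *ᵥ p) v :=
      mulVec_apply_pos (fun w => nonneg (hA w)) (fun w => (hp w).1) (hw ▸ one_pos)
    exact fderiv_mulVec_div_one_sub_single_pos A B μ v hμ_pos hD hN (nonneg (hA u))
      (nonneg (hB u))
      (h.imp (fun h : A v u = 1 => h ▸ one_pos) (fun h : B v u = 1 => h ▸ one_pos))
  · obtain ⟨hAu, hBu⟩ := not_or.1 h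
    exact fderiv_mulVec_div_one_sub_single_eq_zero A B μ v hD.ne'
      ((hA u).resolve_right hAu) ((hB u).resolve_right hBu)

end ZeroOne

namespace SimpleGraph

section Kronecker

variable {V W R : Type*} [MulZeroOneClass R]

theorem adjMatrix_kronecker_one_apply [DecidableEq W] (G : SimpleGraph V) [DecidableRel G.Adj]
    (v u : V × W) :
    (G.adjMatrix R ⊗ₖ (1 : Matrix W W R)) v u =
      if G.Adj v.1 u.1 ∧ v.2 = u.2 then 1 else 0 := by
  by_cases h₁ : G.Adj v.1 u.1 <;> by_cases h₂ : v.2 = u.2 <;>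
    simp [kroneckerMap_apply, one_apply, h₁, h₂]

theorem one_kronecker_adjMatrix_apply [DecidableEq V] (H : SimpleGraph W) [DecidableRel H.Adj]
    (v u : V × W) :
    ((1 : Matrix V V R) ⊗ₖ H.adjMatrix R) v u =
      if v.1 = u.1 ∧ H.Adj v.2 u.2 then 1 else 0 := by
  by_cases h₁ : v.1 = u.1 <;> by_cases h₂ : H.Adj v.2 u.2 <;>
    simp [kroneckerMap_apply, one_apply, h₁, h₂]

theorem adjMatrix_kronecker_one_apply_eq_zero_or_one [DecidableEq W] (G : SimpleGraph V)
    [DecidableRel G.Adj] (v u : V × W) :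
    (G.adjMatrix R ⊗ₖ (1 : Matrix W W R)) v u = 0 ∨
      (G.adjMatrix R ⊗ₖ (1 : Matrix W W R)) v u = 1 := by
  rw [adjMatrix_kronecker_one_apply]
  exact (ite_eq_or_eq ..).symm

theorem one_kronecker_adjMatrix_apply_eq_zero_or_one [DecidableEq V] (H : SimpleGraph W)
    [DecidableRel H.Adj] (v u : V × W) :
    ((1 : Matrix V V R) ⊗ₖ H.adjMatrix R) v u = 0 ∨
      ((1 : Matrix V V R) ⊗ₖ H.adjMatrix R) v u = 1 := by
  rw [one_kronecker_adjMatrix_apply]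
  exact (ite_eq_or_eq ..).symm

theorem Preconnected.exists_adjMatrix_kronecker_one_apply_eq_one [DecidableEq W] [Nontrivial V]
    {G : SimpleGraph V} [DecidableRel G.Adj] (hG : G.Preconnected) (v : V × W) :
    ∃ u, (G.adjMatrix R ⊗ₖ (1 : Matrix W W R)) v u = 1 := by
  obtain ⟨b, hb⟩ := hG.exists_adj_of_nontrivial v.1
  exact ⟨(b, v.2), by simp [hb]⟩

theorem boxProd_adj_iff_kronecker [DecidableEq V] [DecidableEq W] [Nontrivial R]
    (G : SimpleGraph V) (H : SimpleGraph W) [DecidableRel G.Adj] [DecidableRel H.Adj]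
    (v u : V × W) :
    (G □ H).Adj v u ↔ (G.adjMatrix R ⊗ₖ (1 : Matrix W W R)) v u = 1 ∨
      ((1 : Matrix V V R) ⊗ₖ H.adjMatrix R) v u = 1 := by
  rw [boxProd_adj, adjMatrix_kronecker_one_apply, one_kronecker_adjMatrix_apply]
  simp [and_comm]

end Kronecker

theorem Connected.exists_adjMatrix_pow_pos {V R : Type*} [Fintype V] [DecidableEq V]
    [Nontrivial V] {G : SimpleGraph V} [DecidableRel G.Adj]
    [Semiring R] [PartialOrder R] [IsOrderedRing R] [Nontrivial R]
    (hG : G.Connected) (u v : V) : ∃ k, 1 ≤ k ∧ 0 < (G.adjMatrix R ^ k) u v := by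
  obtain ⟨w, huw⟩ := hG.preconnected.exists_adj_of_nontrivial u
  obtain ⟨walk⟩ := hG.preconnected w v
  refine ⟨(walk.cons huw).length, by simp, ?_⟩
  rw [adjMatrix_pow_apply_eq_card_walk, Nat.cast_pos]
  exact Fintype.card_pos_iff.2 ⟨⟨_, rfl⟩⟩

end SimpleGraph

theorem separatedEffect_irreducible_general {n m : ℕ} (hn : 2 ≤ n)
    (Gs : SimpleGraph (Fin n)) (Gb : SimpleGraph (Fin m))
    [DecidableRel Gs.Adj] [DecidableRel Gb.Adj] [DecidableRel (Gs □ Gb).Adj]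
    (hGs : Gs.Connected) (hGb : Gb.Connected)
    (Ac Ae : Matrix (Fin n × Fin m) (Fin n × Fin m) ℝ)
    (hAc : Ac = (Gs.adjMatrix ℝ) ⊗ₖ (1 : Matrix (Fin m) (Fin m) ℝ))
    (hAe : Ae = (1 : Matrix (Fin n) (Fin n) ℝ) ⊗ₖ (Gb.adjMatrix ℝ))
    (M : Fin n × Fin m → ℝ) (hM : ∀ v, M v = 1 + ∑ u, Ae v u)
    (g : (Fin n × Fin m) → ((Fin n × Fin m) → ℝ) → ℝ)
    (hg : ∀ v p, g v p = (Ac.mulVec p) v / (1 - (Ae.mulVec p) v / M v))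
    (J : Matrix (Fin n × Fin m) (Fin n × Fin m) ℝ)
    (hJ1 : ∀ v u, (∀ p : (Fin n × Fin m) → ℝ, (∀ w, p w ∈ Set.Ioo (0:ℝ) 1) →
      0 < fderiv ℝ (g v) p (Pi.single u 1)) → J v u = 1)
    (hJ0 : ∀ v u, ¬ (∀ p : (Fin n × Fin m) → ℝ, (∀ w, p w ∈ Set.Ioo (0:ℝ) 1) →
      0 < fderiv ℝ (g v) p (Pi.single u 1)) → J v u = 0) :
    -- g is well defined on the open cube: the denominator is strictly positive
    (∀ p : (Fin n × Fin m) → ℝ, (∀ w, p w ∈ Set.Ioo (0:ℝ) 1) →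
      ∀ v, 0 < 1 - (Ae.mulVec p) v / M v) ∧
    -- sign of the partial derivatives on the open cube
    (∀ p : (Fin n × Fin m) → ℝ, (∀ w, p w ∈ Set.Ioo (0:ℝ) 1) →
      ∀ v u, DifferentiableAt ℝ (g v) p ∧
        ((Ac v u = 1 ∨ Ae v u = 1) → 0 < fderiv ℝ (g v) p (Pi.single u 1)) ∧
        (¬ (Ac v u = 1 ∨ Ae v u = 1) → fderiv ℝ (g v) p (Pi.single u 1) = 0)) ∧
    -- J is the adjacency matrix of the box product and is irreducible
    J = (Gs □ Gb).adjMatrix ℝ ∧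
    (∀ u v : Fin n × Fin m, ∃ k : ℕ, 1 ≤ k ∧ 0 < (J ^ k) u v) := by
  have : Nontrivial (Fin n) := Fin.nontrivial_iff_two_le.2 hn
  have : Nonempty (Fin m) := hGb.nonempty
  have hg' (v) : g v = fun q => (Ac *ᵥ q) v / (1 - (Ae *ᵥ q) v / M v) := funext (hg v)
  have hAc01 := hAc ▸ SimpleGraph.adjMatrix_kronecker_one_apply_eq_zero_or_one (R := ℝ) Gs
  have hAe01 := hAe ▸ SimpleGraph.one_kronecker_adjMatrix_apply_eq_zero_or_one (R := ℝ) Gb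
  have hrow := hAc ▸ hGs.preconnected.exists_adjMatrix_kronecker_one_apply_eq_one (R := ℝ)
  have hM_gt (v) : ∑ w, Ae v w < M v := hM v ▸ lt_one_add _
  have hden (p : Fin n × Fin m → ℝ) (hp : ∀ w, p w ∈ Set.Ioo (0 : ℝ) 1) (v) :
      0 < 1 - (Ae *ᵥ p) v / M v :=
    one_sub_mulVec_div_pos (fun w => (hAe01 v w).elim ge_of_eq (· ▸ zero_le_one))
      (fun w => (hp w).2.le) (hM_gt v)
  have hsign (p : Fin n × Fin m → ℝ) (hp : ∀ w, p w ∈ Set.Ioo (0 : ℝ) 1) (v u) :=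
    hg' v ▸ fderiv_mulVec_div_one_sub_single_sign_of_zero_one (hAc01 v) (hAe01 v) (hrow v)
      (hM_gt v) hp u
  have hadj (v u) : (Gs □ Gb).Adj v u ↔ Ac v u = 1 ∨ Ae v u = 1 :=
    hAc ▸ hAe ▸ SimpleGraph.boxProd_adj_iff_kronecker Gs Gb v u
  have hJ : J = (Gs □ Gb).adjMatrix ℝ := by
    ext v u
    by_cases h : (Gs □ Gb).Adj v u
    · rw [hJ1 v u fun p hp => (hsign p hp v u).1 ((hadj v u).1 h), SimpleGraph.adjMatrix_apply,
        if_pos h]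
    · have hhalf : ∀ w, (fun _ => 1 / 2 : Fin n × Fin m → ℝ) w ∈ Set.Ioo (0 : ℝ) 1 :=
        fun _ => by norm_num
      rw [hJ0 v u fun hpos => ?_, SimpleGraph.adjMatrix_apply, if_neg h]
      exact (hpos _ hhalf).ne' ((hsign _ hhalf v u).2 ((hadj v u).not.1 h))
  refine ⟨hden, fun p hp v u => ⟨?_, hsign p hp v u⟩, hJ, ?_⟩
  · exact hg' v ▸ differentiableAt_mulVec_div_one_sub Ac Ae (M v) v (hden p hp v).ne'
  · exact hJ ▸ (SimpleGraph.connected_boxProd.2 ⟨hGs, hGb⟩).exists_adjMatrix_pow_pos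

/-- Irreducibility of the separated-effect submodel: with colonisation matrix
`A_c = A_s ⊗ I_m` and extinction matrix `A_e = I_n ⊗ A_b`, the function
`g_v(p) = (A_c p)_v / (1 - (A_e p)_v / M_v)` is well defined on the open cube,
its partial derivative `∂g_v/∂p_u` is strictly positive there exactly when
`(A_c)_{vu} = 1` or `(A_e)_{vu} = 1` (and zero otherwise), and the resulting
0-1 matrix `J` is the adjacency matrix of the box product `G_s □ G_b`, hence
irreducible. -/
theorem separatedEffect_irreducible {n m : ℕ} (hn : 2 ≤ n) (hm : 2 ≤ m)
    (Gs : SimpleGraph (Fin n)) (Gb : SimpleGraph (Fin m))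
    [DecidableRel Gs.Adj] [DecidableRel Gb.Adj] [DecidableRel (Gs □ Gb).Adj]
    (hGs : Gs.Connected) (hGb : Gb.Connected)
    (Ac Ae : Matrix (Fin n × Fin m) (Fin n × Fin m) ℝ)
    (hAc : Ac = (Gs.adjMatrix ℝ) ⊗ₖ (1 : Matrix (Fin m) (Fin m) ℝ))
    (hAe : Ae = (1 : Matrix (Fin n) (Fin n) ℝ) ⊗ₖ (Gb.adjMatrix ℝ))
    (M : Fin n × Fin m → ℝ) (hM : ∀ v, M v = 1 + ∑ u, Ae v u)
    (g : (Fin n × Fin m) → ((Fin n × Fin m) → ℝ) → ℝ)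
    (hg : ∀ v p, g v p = (Ac.mulVec p) v / (1 - (Ae.mulVec p) v / M v))
    (J : Matrix (Fin n × Fin m) (Fin n × Fin m) ℝ)
    (hJ1 : ∀ v u, (∀ p : (Fin n × Fin m) → ℝ, (∀ w, p w ∈ Set.Ioo (0:ℝ) 1) →
      0 < fderiv ℝ (g v) p (Pi.single u 1)) → J v u = 1)
    (hJ0 : ∀ v u, ¬ (∀ p : (Fin n × Fin m) → ℝ, (∀ w, p w ∈ Set.Ioo (0:ℝ) 1) →
      0 < fderiv ℝ (g v) p (Pi.single u 1)) → J v u = 0) :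
    -- g is well defined on the open cube: the denominator is strictly positive
    (∀ p : (Fin n × Fin m) → ℝ, (∀ w, p w ∈ Set.Ioo (0:ℝ) 1) →
      ∀ v, 0 < 1 - (Ae.mulVec p) v / M v) ∧
    -- sign of the partial derivatives on the open cube
    (∀ p : (Fin n × Fin m) → ℝ, (∀ w, p w ∈ Set.Ioo (0:ℝ) 1) →
      ∀ v u, DifferentiableAt ℝ (g v) p ∧
        ((Ac v u = 1 ∨ Ae v u = 1) → 0 < fderiv ℝ (g v) p (Pi.single u 1)) ∧
        (¬ (Ac v u = 1 ∨ Ae v u = 1) → fderiv ℝ (g v) p (Pi.single u 1) = 0)) ∧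
    -- J is the adjacency matrix of the box product and is irreducible
    J = (Gs □ Gb).adjMatrix ℝ ∧
    (∀ u v : Fin n × Fin m, ∃ k : ℕ, 1 ≤ k ∧ 0 < (J ^ k) u v) :=
  separatedEffect_irreducible_general hn Gs Gb hGs hGb Ac Ae hAc hAe M hM g hg J hJ1 hJ0
end

section
/- Let A be an N×N real symmetric matrix with nonnegative entries that is irreducible. Then sup over p ∈ (0,1)^N of min over i of (A p)_i (1 − p_i)/p_i equals λ_max(A), the largest eigenvalue of A. -/
/-!
Write `μ` for the largest eigenvalue of `A` and `F p` for the minimum in the statement.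
If `m ≤ F p` then `m p ≤ A p` entrywise, so `m ‖p‖² ≤ ⟪p, A p⟫ ≤ μ ‖p‖²` by the Rayleigh bound,
hence `F ≤ μ`. Conversely, for an eigenvector `v` of `μ` the vector `|v|` has at least the
Rayleigh quotient of `v`, so it is again an eigenvector of `μ`, and irreducibility makes it
strictly positive. Along `p = t |v|` one has `F p = minᵢ μ (1 - t |vᵢ|)`, which tends to `μ` as
`t → 0⁺`.
-/

open Matrix Filter Topology Set
open scoped MatrixOrder

lemma smul_apply_mem_Ioo_zero_one {ι : Type*} [Fintype ι] {w : ι → ℝ} (hw : ∀ i, 0 < w i) {t : ℝ}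
    (ht : t ∈ Ioo 0 (1 / ∑ j, w j)) (i : ι) : (t • w) i ∈ Ioo 0 1 := by
  have hsum : 0 < ∑ j, w j := Finset.sum_pos (fun j _ => hw j) ⟨i, Finset.mem_univ i⟩
  have hwi : w i ≤ ∑ j, w j := Finset.single_le_sum (fun j _ => (hw j).le) (Finset.mem_univ i)
  refine ⟨mul_pos ht.1 (hw i), ?_⟩
  calc t * w i ≤ t * ∑ j, w j := mul_le_mul_of_nonneg_left hwi ht.1.le
    _ < 1 := (lt_div_iff₀ hsum).mp ht.2

namespace Matrix

section

variable {ι R : Type*} [Fintype ι] {A : Matrix ι ι R}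

lemma mulVec_nonneg [Semiring R] [PartialOrder R] [IsOrderedRing R] (hA : ∀ i j, 0 ≤ A i j)
    {x : ι → R} (hx : 0 ≤ x) : 0 ≤ A *ᵥ x :=
  fun i => Finset.sum_nonneg fun j _ => mul_nonneg (hA i j) (hx j)

variable [DecidableEq ι]

lemma pow_mulVec_eq_smul [CommSemiring R] {r : R} {w : ι → R} (hAw : A *ᵥ w = r • w)
    (k : ℕ) : (A ^ k) *ᵥ w = r ^ k • w := by
  induction k with
  | zero => simp
  | succ k ih => rw [pow_succ', ← mulVec_mulVec, ih, mulVec_smul, hAw, smul_smul, pow_succ]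

lemma algebraMap_sub_mulVec [CommRing R] (r : R) (x : ι → R) :
    (algebraMap R (Matrix ι ι R) r - A) *ᵥ x = r • x - A *ᵥ x := by
  rw [Algebra.algebraMap_eq_smul_one, sub_mulVec, smul_mulVec, one_mulVec]

variable [CommRing R] [LinearOrder R] [IsStrictOrderedRing R]

lemma IsIrreducible.pos_of_mulVec_eq_smul (hA : A.IsIrreducible) {r : R} {w : ι → R}
    (hw : 0 ≤ w) (hw0 : w ≠ 0) (hAw : A *ᵥ w = r • w) (u : ι) : 0 < w u := by
  obtain ⟨v, hv⟩ := Function.ne_iff.mp hw0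
  obtain ⟨k, -, hk⟩ := (isIrreducible_iff_exists_pow_pos hA.nonneg).mp hA u v
  have hpos : 0 < r ^ k * w u :=
    calc 0 < (A ^ k) u v * w v := mul_pos hk ((hw v).lt_of_ne' hv)
      _ ≤ ((A ^ k) *ᵥ w) u :=
        Finset.single_le_sum (f := fun j => (A ^ k) u j * w j)
          (fun j _ => mul_nonneg (pow_apply_nonneg hA.nonneg k u j) (hw j)) (Finset.mem_univ v)
      _ = r ^ k * w u := by rw [pow_mulVec_eq_smul hAw]; rfl
  exact (hw u).lt_of_ne fun h => by simp [← h] at hpos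

end

namespace IsHermitian

variable {ι : Type*} [Fintype ι] [DecidableEq ι] {A : Matrix ι ι ℝ} (hA : A.IsHermitian)
include hA

lemma posSemidef_algebraMap_sSup_spectrum_sub :
    (algebraMap ℝ (Matrix ι ι ℝ) (sSup (spectrum ℝ A)) - A).PosSemidef :=
  le_algebraMap_of_spectrum_le (fun _ hx => le_csSup finite_real_spectrum.bddAbove hx) hA

lemma dotProduct_mulVec_le_sSup_spectrum_mul (x : ι → ℝ) :
    x ⬝ᵥ A *ᵥ x ≤ sSup (spectrum ℝ A) * (x ⬝ᵥ x) := by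
  have := hA.posSemidef_algebraMap_sSup_spectrum_sub.dotProduct_mulVec_nonneg x
  rw [star_trivial, algebraMap_sub_mulVec, dotProduct_sub, dotProduct_smul, smul_eq_mul] at this
  linarith

lemma mulVec_eq_smul_of_dotProduct_mulVec_eq {x : ι → ℝ}
    (hx : x ⬝ᵥ A *ᵥ x = sSup (spectrum ℝ A) * (x ⬝ᵥ x)) :
    A *ᵥ x = sSup (spectrum ℝ A) • x := by
  have := (hA.posSemidef_algebraMap_sSup_spectrum_sub.dotProduct_mulVec_zero_iff x).mp (by
    rw [star_trivial, algebraMap_sub_mulVec, dotProduct_sub, dotProduct_smul, smul_eq_mul, hx,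
      sub_self])
  rw [algebraMap_sub_mulVec, sub_eq_zero] at this
  exact this.symm

lemma sSup_spectrum_mem [Nonempty ι] : sSup (spectrum ℝ A) ∈ spectrum ℝ A :=
  Set.Nonempty.csSup_mem ⟨_, hA.eigenvalues_mem_spectrum_real (Classical.arbitrary ι)⟩
    finite_real_spectrum

lemma exists_mulVec_eq_sSup_spectrum_smul [Nonempty ι] :
    ∃ v ≠ 0, A *ᵥ v = sSup (spectrum ℝ A) • v := by
  have : Module.End.HasEigenvalue (toLin' A) (sSup (spectrum ℝ A)) :=
    Module.End.hasEigenvalue_iff_mem_spectrum.mpr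
      (by rw [spectrum_toLin']; exact hA.sSup_spectrum_mem)
  obtain ⟨v, hv⟩ := this.exists_hasEigenvector
  exact ⟨v, hv.2, hv.apply_eq_smul⟩

lemma exists_nonneg_mulVec_eq_sSup_spectrum_smul [Nonempty ι] (hA0 : ∀ i j, 0 ≤ A i j) :
    ∃ w, 0 ≤ w ∧ w ≠ 0 ∧ A *ᵥ w = sSup (spectrum ℝ A) • w := by
  obtain ⟨v, hv0, hAv⟩ := hA.exists_mulVec_eq_sSup_spectrum_smul
  refine ⟨|v|, abs_nonneg v, by simpa using hv0, hA.mulVec_eq_smul_of_dotProduct_mulVec_eq ?_⟩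
  have hnorm : |v| ⬝ᵥ |v| = v ⬝ᵥ v := Finset.sum_congr rfl fun i _ => abs_mul_abs_self (v i)
  have hquad : v ⬝ᵥ A *ᵥ v ≤ |v| ⬝ᵥ A *ᵥ |v| := by
    simp only [dotProduct, mulVec, Finset.mul_sum]
    refine Finset.sum_le_sum fun i _ => Finset.sum_le_sum fun j _ => ?_
    calc v i * (A i j * v j) ≤ |v i * (A i j * v j)| := le_abs_self _
      _ = |v| i * (A i j * |v| j) := by simp [abs_mul, abs_of_nonneg (hA0 i j)]
  have hμ : v ⬝ᵥ A *ᵥ v = sSup (spectrum ℝ A) * (v ⬝ᵥ v) := by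
    rw [hAv, dotProduct_smul, smul_eq_mul]
  have hle := hA.dotProduct_mulVec_le_sSup_spectrum_mul |v|
  rw [hnorm] at hle ⊢
  linarith

lemma le_sSup_spectrum_of_mul_le_mulVec [Nonempty ι] {m : ℝ} {p : ι → ℝ}
    (hp : ∀ i, 0 < p i) (h : ∀ i, m * p i ≤ (A *ᵥ p) i) : m ≤ sSup (spectrum ℝ A) := by
  have hpp : 0 < p ⬝ᵥ p :=
    Finset.sum_pos (fun i _ => mul_pos (hp i) (hp i)) Finset.univ_nonempty
  have hquad : m * (p ⬝ᵥ p) ≤ p ⬝ᵥ A *ᵥ p := by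
    rw [dotProduct, Finset.mul_sum]
    exact Finset.sum_le_sum fun i _ => by nlinarith [h i, hp i]
  exact le_of_mul_le_mul_right (hquad.trans (hA.dotProduct_mulVec_le_sSup_spectrum_mul p)) hpp

lemma iInf_mulVec_mul_one_sub_div_le_sSup_spectrum [Nonempty ι] (hA0 : ∀ i j, 0 ≤ A i j)
    {p : ι → ℝ} (hp : ∀ i, p i ∈ Ioo 0 1) :
    ⨅ i, (A *ᵥ p) i * (1 - p i) / p i ≤ sSup (spectrum ℝ A) := by
  refine hA.le_sSup_spectrum_of_mul_le_mulVec (fun i => (hp i).1) fun i => ?_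
  have hAp : 0 ≤ (A *ᵥ p) i := mulVec_nonneg hA0 (fun j => (hp j).1.le) i
  calc (⨅ i, (A *ᵥ p) i * (1 - p i) / p i) * p i
      ≤ (A *ᵥ p) i * (1 - p i) / p i * p i :=
        mul_le_mul_of_nonneg_right (ciInf_le (Finite.bddBelow_range _) i) (hp i).1.le
    _ = (A *ᵥ p) i * (1 - p i) := div_mul_cancel₀ _ (hp i).1.ne'
    _ ≤ (A *ᵥ p) i := by nlinarith [(hp i).1]

end IsHermitian

variable {ι : Type*} [Fintype ι] {A : Matrix ι ι ℝ}

lemma mul_one_sub_mul_sum_le_iInf_smul [Nonempty ι] {μ t : ℝ} {w : ι → ℝ}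
    (hAw : A *ᵥ w = μ • w) (hμ : 0 ≤ μ) (hw : ∀ i, 0 < w i) (ht : 0 < t) :
    μ * (1 - t * ∑ j, w j) ≤
      ⨅ i, (A *ᵥ (t • w)) i * (1 - (t • w) i) / (t • w) i := by
  refine le_ciInf fun i => ?_
  have hwi : w i ≤ ∑ j, w j := Finset.single_le_sum (fun j _ => (hw j).le) (Finset.mem_univ i)
  have hterm : (A *ᵥ (t • w)) i * (1 - (t • w) i) / (t • w) i = μ * (1 - t * w i) := by
    rw [mulVec_smul, hAw, smul_smul]
    simp only [Pi.smul_apply, smul_eq_mul]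
    field_simp [(hw i).ne', ht.ne']
  rw [hterm]
  gcongr

lemma le_iSup_iInf_mulVec_mul_one_sub_div [Nonempty ι] {μ : ℝ} {w : ι → ℝ}
    (hAw : A *ᵥ w = μ • w) (hμ : 0 ≤ μ) (hw : ∀ i, 0 < w i)
    (hbdd : BddAbove (range fun p : {p : ι → ℝ // ∀ i, p i ∈ Ioo 0 1} =>
      ⨅ i, (A *ᵥ p.1) i * (1 - p.1 i) / p.1 i)) :
    μ ≤ ⨆ p : {p : ι → ℝ // ∀ i, p i ∈ Ioo 0 1},
      ⨅ i, (A *ᵥ p.1) i * (1 - p.1 i) / p.1 i := by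
  have hsum : 0 < 1 / ∑ j, w j :=
    one_div_pos.mpr (Finset.sum_pos (fun j _ => hw j) Finset.univ_nonempty)
  have hlim : Tendsto (fun t => μ * (1 - t * ∑ j, w j)) (𝓝[>] 0) (𝓝 μ) :=
    tendsto_nhdsWithin_of_tendsto_nhds (Continuous.tendsto' (by fun_prop) _ _ (by simp))
  refine le_of_tendsto hlim ?_
  filter_upwards [Ioo_mem_nhdsGT hsum] with t ht
  exact (mul_one_sub_mul_sum_le_iInf_smul hAw hμ hw ht.1).trans
    (le_ciSup hbdd ⟨t • w, smul_apply_mem_Ioo_zero_one hw ht⟩)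

end Matrix

/-- For an irreducible nonnegative real symmetric matrix `A`, the metapopulation
persistence capacity `sup_{p ∈ (0,1)^N} min_i (A p)_i (1 - p_i)/p_i` equals the
largest eigenvalue of `A`. -/
theorem persistenceCapacity_eq_lambdaMax {N : ℕ} (hN : 1 ≤ N)
    (A : Matrix (Fin N) (Fin N) ℝ)
    (hsymm : A.IsSymm) (hnonneg : ∀ i j, 0 ≤ A i j)
    (hirr : ∀ u v : Fin N, ∃ k : ℕ, 1 ≤ k ∧ 0 < (A ^ k) u v) :
    (⨆ p : {p : Fin N → ℝ // ∀ i, p i ∈ Set.Ioo (0:ℝ) 1},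
        ⨅ i, (A.mulVec p.1) i * (1 - p.1 i) / p.1 i)
      = sSup (spectrum ℝ A) := by
  have : Nonempty (Fin N) := ⟨⟨0, hN⟩⟩
  have hA : A.IsHermitian := isHermitian_iff_isSymm.mpr hsymm
  have hAirr : A.IsIrreducible := (isIrreducible_iff_exists_pow_pos hnonneg).mpr hirr
  obtain ⟨w, hw0, hw, hAw⟩ := hA.exists_nonneg_mulVec_eq_sSup_spectrum_smul hnonneg
  have hwpos : ∀ i, 0 < w i := hAirr.pos_of_mulVec_eq_smul hw0 hw hAw
  have hμ : 0 ≤ sSup (spectrum ℝ A) := hA.le_sSup_spectrum_of_mul_le_mulVec hwpos fun i => by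
    rw [zero_mul]; exact mulVec_nonneg hnonneg hw0 i
  have hle : ∀ p : {p : Fin N → ℝ // ∀ i, p i ∈ Ioo 0 1},
      ⨅ i, (A *ᵥ p.1) i * (1 - p.1 i) / p.1 i ≤ sSup (spectrum ℝ A) :=
    fun p => hA.iInf_mulVec_mul_one_sub_div_le_sSup_spectrum hnonneg p.2
  exact le_antisymm (Real.iSup_le hle hμ)
    (le_iSup_iInf_mulVec_mul_one_sub_div hAw hμ hwpos ⟨_, forall_mem_range.2 hle⟩)
end

section
/- Let G_s be a connected simple graph on n ≥ 2 vertices with adjacency matrix A_s and largest eigenvalue Λ_s, and G_b a connected simple graph on m ≥ 2 vertices with adjacency matrix A_b and largest eigenvalue Λ_b. Let A = A_s ⊗ I_m + I_n ⊗ A_b be the adjacency matrix of the product network. Then the metacommunity persistence capacity of the Levins-type submodel, λ_M = sup over p ∈ (0,1)^{nm} of min over v of (A p)_v (1 − p_v)/p_v, equals Λ_s + Λ_b. -/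
/-!
Let `w_s`, `w_b` be positive eigenvectors of the adjacency matrices for their top eigenvalues
`Λ_s`, `Λ_b` (Perron vectors). Then `w v = w_s v.1 * w_b v.2` is a positive eigenvector of the
symmetric nonnegative matrix `A` for `Λ = Λ_s + Λ_b`. Pairing with `w` shows that every `p` has a
vertex with `(A p)_v ≤ Λ p_v`, so each objective value is at most `Λ`; conversely `p = c w` gives
the value `min_v Λ (1 - c w_v)`, which tends to `Λ` as `c → 0`.

The Perron vector of a connected graph comes from a top eigenvector `y`: since the adjacency
matrix is nonnegative, `|y|` has Rayleigh quotient at least `Λ`, so the positive semidefinite form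
of `Λ - A` vanishes at `|y|`, which makes `|y|` an eigenvector; connectivity then spreads
positivity from one vertex to all of them.
-/

open Kronecker Matrix Finset

namespace Matrix

section Perron

variable {n : Type*} [Fintype n] [DecidableEq n]

theorem IsHermitian.posSemidef_algebraMap_sSup_spectrum_sub_s12 {A : Matrix n n ℝ}
    (hA : A.IsHermitian) :
    (algebraMap ℝ (Matrix n n ℝ) (sSup (spectrum ℝ A)) - A).PosSemidef := by
  rw [posSemidef_iff_isHermitian_and_spectrum_nonneg]
  refine ⟨IsSelfAdjoint.sub (.algebraMap _ (.all _)) hA, ?_⟩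
  rw [← spectrum.singleton_sub_eq]
  rintro _ ⟨_, rfl, μ, hμ, rfl⟩
  exact sub_nonneg.2 (le_csSup (finite_real_spectrum (A := A)).bddAbove hμ)

theorem IsHermitian.exists_mulVec_eq_sSup_spectrum_smul_s12 [Nonempty n] {A : Matrix n n ℝ}
    (hA : A.IsHermitian) : ∃ y : n → ℝ, y ≠ 0 ∧ A *ᵥ y = sSup (spectrum ℝ A) • y := by
  obtain ⟨i, hi⟩ : sSup (spectrum ℝ A) ∈ Set.range hA.eigenvalues := by
    rw [hA.spectrum_real_eq_range_eigenvalues]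
    exact (Set.range_nonempty _).csSup_mem (Set.finite_range _)
  refine ⟨hA.eigenvectorBasis i, ?_, by rw [hA.mulVec_eigenvectorBasis, hi]⟩
  simpa using hA.eigenvectorBasis.orthonormal.ne_zero i

omit [DecidableEq n] in
theorem dotProduct_mulVec_le_abs {A : Matrix n n ℝ} (hA : ∀ i j, 0 ≤ A i j) (x : n → ℝ) :
    x ⬝ᵥ A *ᵥ x ≤ |x| ⬝ᵥ A *ᵥ |x| := by
  simp only [dotProduct, mulVec, mul_sum, Pi.abs_apply]
  refine sum_le_sum fun i _ => sum_le_sum fun j _ => ?_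
  calc x i * (A i j * x j) ≤ |x i * (A i j * x j)| := le_abs_self _
    _ = |x i| * (A i j * |x j|) := by rw [abs_mul, abs_mul, abs_of_nonneg (hA i j)]

theorem IsHermitian.exists_nonneg_mulVec_eq_sSup_spectrum_smul_s12 [Nonempty n] {A : Matrix n n ℝ}
    (hA : A.IsHermitian) (hA₀ : ∀ i j, 0 ≤ A i j) :
    ∃ z : n → ℝ, z ≠ 0 ∧ 0 ≤ z ∧ A *ᵥ z = sSup (spectrum ℝ A) • z := by
  set Λ := sSup (spectrum ℝ A)
  set B := algebraMap ℝ (Matrix n n ℝ) Λ - A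
  have hB : B.PosSemidef := hA.posSemidef_algebraMap_sSup_spectrum_sub_s12
  have hBform : ∀ x, x ⬝ᵥ B *ᵥ x = Λ * (x ⬝ᵥ x) - x ⬝ᵥ A *ᵥ x := fun x => by
    simp [B, sub_mulVec, Algebra.algebraMap_eq_smul_one, dotProduct_sub, smul_mulVec]
  obtain ⟨y, hy₀, hy⟩ := hA.exists_mulVec_eq_sSup_spectrum_smul_s12
  have hyy : |y| ⬝ᵥ |y| = y ⬝ᵥ y := by simp [dotProduct, abs_mul_abs_self]
  have hzero : |y| ⬝ᵥ B *ᵥ |y| = 0 := by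
    refine le_antisymm ?_ (by simpa using hB.dotProduct_mulVec_nonneg |y|)
    have hyAy : y ⬝ᵥ A *ᵥ y = Λ * (y ⬝ᵥ y) := by rw [hy, dotProduct_smul, smul_eq_mul]
    rw [hBform, hyy]
    linarith [dotProduct_mulVec_le_abs hA₀ y]
  have hBy : B *ᵥ |y| = 0 := (hB.dotProduct_mulVec_zero_iff |y|).1 (by simpa using hzero)
  refine ⟨|y|, by simpa using hy₀, abs_nonneg y, ?_⟩
  simpa [B, sub_mulVec, Algebra.algebraMap_eq_smul_one, smul_mulVec, sub_eq_zero, eq_comm] using hBy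

end Perron

section KroneckerSum

variable {R : Type*} [CommSemiring R] {l m p q : Type*} [Fintype m] [Fintype q]

theorem kronecker_mulVec_mul (M : Matrix l m R) (N : Matrix p q R) (a : m → R) (b : q → R) :
    (M ⊗ₖ N) *ᵥ (fun v => a v.1 * b v.2) = fun v => (M *ᵥ a) v.1 * (N *ᵥ b) v.2 := by
  ext ⟨i, j⟩
  simp only [mulVec, dotProduct, Fintype.sum_prod_type, kroneckerMap_apply, sum_mul_sum]
  exact sum_congr rfl fun _ _ => sum_congr rfl fun _ _ => by ring

variable [DecidableEq l] [DecidableEq p]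

def kroneckerSum (M : Matrix l l R) (N : Matrix p p R) : Matrix (l × p) (l × p) R :=
  M ⊗ₖ (1 : Matrix p p R) + (1 : Matrix l l R) ⊗ₖ N

theorem kroneckerSum_mulVec_mul_of_mulVec_eq_smul [Fintype l] [Fintype p]
    {M : Matrix l l R} {N : Matrix p p R} {a : l → R} {b : p → R} {μ ν : R}
    (ha : M *ᵥ a = μ • a) (hb : N *ᵥ b = ν • b) :
    kroneckerSum M N *ᵥ (fun v => a v.1 * b v.2) = (μ + ν) • fun v => a v.1 * b v.2 := by
  ext v
  simp only [kroneckerSum, add_mulVec, kronecker_mulVec_mul, ha, hb, one_mulVec, Pi.add_apply,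
    Pi.smul_apply, smul_eq_mul]
  ring

theorem IsSymm.kroneckerSum {M : Matrix l l R} {N : Matrix p p R} (hM : M.IsSymm)
    (hN : N.IsSymm) : (kroneckerSum M N).IsSymm := by
  simp only [Matrix.kroneckerSum, IsSymm, transpose_add, ← kroneckerMap_transpose, hM.eq, hN.eq,
    transpose_one]

theorem kroneckerSum_nonneg [PartialOrder R] [IsOrderedRing R] {M : Matrix l l R}
    {N : Matrix p p R} (hM : ∀ i j, 0 ≤ M i j) (hN : ∀ i j, 0 ≤ N i j) (u v : l × p) :
    0 ≤ kroneckerSum M N u v := by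
  simp only [kroneckerSum, add_apply, kroneckerMap_apply, one_apply]
  split_ifs <;> simp [hM, hN, add_nonneg]

end KroneckerSum

end Matrix

namespace SimpleGraph

variable {V : Type*} {G : SimpleGraph V} [DecidableRel G.Adj]

theorem adjMatrix_nonneg {α : Type*} [Zero α] [One α] [Preorder α] [ZeroLEOneClass α] (i j : V) :
    0 ≤ G.adjMatrix α i j := by
  rw [adjMatrix_apply]
  split_ifs
  exacts [zero_le_one, le_rfl]

variable [Fintype V]

theorem Connected.pos_of_adjMatrix_mulVec_eq_smul (hG : G.Connected) {z : V → ℝ} {c : ℝ}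
    (hz₀ : z ≠ 0) (hz : 0 ≤ z) (hGz : G.adjMatrix ℝ *ᵥ z = c • z) (i : V) : 0 < z i := by
  have hadj : ∀ {i j}, G.Adj i j → z i = 0 → z j = 0 := fun {i j} hij hi => by
    have hsum : ∑ u ∈ G.neighborFinset i, z u = 0 := by
      rw [← adjMatrix_mulVec_apply, hGz, Pi.smul_apply, hi, smul_zero]
    exact (sum_eq_zero_iff_of_nonneg fun u _ => hz u).1 hsum j (by simpa using hij)
  have hwalk : ∀ {i j} (w : G.Walk i j), z i = 0 → z j = 0 := fun w => by
    induction w with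
    | nil => exact id
    | cons h _ ih => exact ih ∘ hadj h
  obtain ⟨j, hj⟩ : ∃ j, z j ≠ 0 := by
    by_contra! h
    exact hz₀ (funext h)
  exact (hz i).lt_of_ne fun hi => hj (hwalk (hG i j).some hi.symm)

theorem Connected.exists_pos_adjMatrix_mulVec_eq_sSup_spectrum_smul [DecidableEq V]
    (hG : G.Connected) : ∃ w : V → ℝ, (∀ i, 0 < w i) ∧
      G.adjMatrix ℝ *ᵥ w = sSup (spectrum ℝ (G.adjMatrix ℝ)) • w := by
  have := hG.nonempty
  obtain ⟨z, hz₀, hz, hGz⟩ :=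
    (G.isHermitian_adjMatrix ℝ).exists_nonneg_mulVec_eq_sSup_spectrum_smul_s12 adjMatrix_nonneg
  exact ⟨z, hG.pos_of_adjMatrix_mulVec_eq_smul hz₀ hz hGz, hGz⟩

end SimpleGraph

section PersistenceCapacity

variable {ι : Type*} [Fintype ι]

noncomputable def persistenceObjective (A : Matrix ι ι ℝ) (p : ι → ℝ) : ℝ :=
  ⨅ v, (A *ᵥ p) v * (1 - p v) / p v

/-- The persistence capacity `λ_M` of the Levins-type submodel with colonisation matrix `A`. -/
noncomputable def persistenceCapacity (A : Matrix ι ι ℝ) : ℝ :=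
  ⨆ p : {p : ι → ℝ // ∀ v, p v ∈ Set.Ioo (0 : ℝ) 1}, persistenceObjective A p.1

theorem exists_mulVec_le_smul_of_vecMul_eq_smul [Nonempty ι] {A : Matrix ι ι ℝ} {w : ι → ℝ}
    {Λ : ℝ} (hw : ∀ v, 0 < w v) (hwA : w ᵥ* A = Λ • w) (p : ι → ℝ) :
    ∃ v, (A *ᵥ p) v ≤ Λ * p v := by
  by_contra! h
  have hlt : w ⬝ᵥ Λ • p < w ⬝ᵥ A *ᵥ p :=
    sum_lt_sum_of_nonempty univ_nonempty fun v _ => by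
      simpa using mul_lt_mul_of_pos_left (h v) (hw v)
  rw [dotProduct_mulVec, hwA, dotProduct_smul, smul_dotProduct] at hlt
  exact hlt.false

theorem persistenceObjective_le [Nonempty ι] {A : Matrix ι ι ℝ} (hA₀ : ∀ i j, 0 ≤ A i j)
    {w : ι → ℝ} {Λ : ℝ} (hw : ∀ v, 0 < w v) (hwA : w ᵥ* A = Λ • w) {p : ι → ℝ}
    (hp : ∀ v, p v ∈ Set.Ioo (0 : ℝ) 1) : persistenceObjective A p ≤ Λ := by
  obtain ⟨v, hv⟩ := exists_mulVec_le_smul_of_vecMul_eq_smul hw hwA p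
  have hAp : 0 ≤ (A *ᵥ p) v := sum_nonneg fun u _ => mul_nonneg (hA₀ v u) (hp u).1.le
  calc persistenceObjective A p ≤ (A *ᵥ p) v * (1 - p v) / p v :=
        ciInf_le (Finite.bddBelow_range _) v
    _ ≤ (A *ᵥ p) v / p v :=
        div_le_div_of_nonneg_right (mul_le_of_le_one_right hAp (by linarith [(hp v).1]))
          (hp v).1.le
    _ ≤ Λ := by rwa [div_le_iff₀ (hp v).1]

theorem exists_sub_le_persistenceObjective [Nonempty ι] {A : Matrix ι ι ℝ}
    (hA₀ : ∀ i j, 0 ≤ A i j) {w : ι → ℝ} {Λ : ℝ} (hw : ∀ v, 0 < w v) (hAw : A *ᵥ w = Λ • w)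
    {ε : ℝ} (hε : 0 < ε) :
    ∃ p : ι → ℝ, (∀ v, p v ∈ Set.Ioo (0 : ℝ) 1) ∧ Λ - ε ≤ persistenceObjective A p := by
  obtain ⟨v₀⟩ := ‹Nonempty ι›
  have hΛ : 0 ≤ Λ := by
    have hAw₀ : 0 ≤ (A *ᵥ w) v₀ := sum_nonneg fun u _ => mul_nonneg (hA₀ v₀ u) (hw u).le
    rw [hAw, Pi.smul_apply, smul_eq_mul] at hAw₀
    exact nonneg_of_mul_nonneg_left hAw₀ (hw v₀)
  set t := ε / (Λ + ε + 1)
  have ht₀ : 0 < t := by positivity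
  have ht₁ : t < 1 := (div_lt_one (by linarith)).2 (by linarith)
  have hΛt : Λ * t ≤ ε := by
    rw [mul_div_assoc', div_le_iff₀ (by linarith)]
    nlinarith
  set S := ∑ v, w v
  have hS : 0 < S := sum_pos (fun v _ => hw v) univ_nonempty
  set c := t / S
  have hc : 0 < c := div_pos ht₀ hS
  have hcw (v : ι) : c * w v ≤ t := by
    calc c * w v ≤ c * S := by gcongr; exact single_le_sum (fun u _ => (hw u).le) (mem_univ v)
      _ = t := div_mul_cancel₀ t hS.ne'
  refine ⟨c • w, fun v => ⟨by simpa using mul_pos hc (hw v), by simpa using (hcw v).trans_lt ht₁⟩,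
    le_ciInf fun v => ?_⟩
  have hval : (A *ᵥ c • w) v * (1 - (c • w) v) / (c • w) v = Λ * (1 - c * w v) := by
    have hwv : w v ≠ 0 := (hw v).ne'
    simp only [mulVec_smul, hAw, Pi.smul_apply, smul_eq_mul]
    field_simp
  rw [hval]
  nlinarith [hcw v]

theorem persistenceCapacity_eq_of_mulVec_eq_smul [Nonempty ι] {A : Matrix ι ι ℝ}
    (hA : A.IsSymm) (hA₀ : ∀ i j, 0 ≤ A i j) {w : ι → ℝ} {Λ : ℝ} (hw : ∀ v, 0 < w v)
    (hAw : A *ᵥ w = Λ • w) : persistenceCapacity A = Λ := by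
  have hwA : w ᵥ* A = Λ • w := by rw [← mulVec_transpose, hA.eq, hAw]
  have hle (p : {p : ι → ℝ // ∀ v, p v ∈ Set.Ioo (0 : ℝ) 1}) : persistenceObjective A p.1 ≤ Λ :=
    persistenceObjective_le hA₀ hw hwA p.2
  have : Nonempty {p : ι → ℝ // ∀ v, p v ∈ Set.Ioo (0 : ℝ) 1} :=
    ⟨⟨fun _ => 1 / 2, fun _ => by norm_num⟩⟩
  refine le_antisymm (ciSup_le hle) (le_of_forall_sub_le fun ε hε => ?_)
  obtain ⟨p, hp, hεp⟩ := exists_sub_le_persistenceObjective hA₀ hw hAw hε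
  exact hεp.trans (le_ciSup ⟨Λ, Set.forall_mem_range.2 hle⟩ ⟨p, hp⟩)

end PersistenceCapacity

theorem levinsType_capacity_eq_sum_general {n m : ℕ}
    (Gs : SimpleGraph (Fin n)) (Gb : SimpleGraph (Fin m))
    [DecidableRel Gs.Adj] [DecidableRel Gb.Adj]
    (hGs : Gs.Connected) (hGb : Gb.Connected)
    (A : Matrix (Fin n × Fin m) (Fin n × Fin m) ℝ)
    (hA : A = (Gs.adjMatrix ℝ) ⊗ₖ (1 : Matrix (Fin m) (Fin m) ℝ)
        + (1 : Matrix (Fin n) (Fin n) ℝ) ⊗ₖ (Gb.adjMatrix ℝ)) :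
    (⨆ p : {p : (Fin n × Fin m) → ℝ // ∀ v, p v ∈ Set.Ioo (0:ℝ) 1},
        ⨅ v, (A.mulVec p.1) v * (1 - p.1 v) / p.1 v)
      = sSup (spectrum ℝ (Gs.adjMatrix ℝ)) + sSup (spectrum ℝ (Gb.adjMatrix ℝ)) := by
  obtain ⟨ws, hws, hGws⟩ := hGs.exists_pos_adjMatrix_mulVec_eq_sSup_spectrum_smul
  obtain ⟨wb, hwb, hGwb⟩ := hGb.exists_pos_adjMatrix_mulVec_eq_sSup_spectrum_smul
  have := hGs.nonempty
  have := hGb.nonempty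
  subst hA
  exact persistenceCapacity_eq_of_mulVec_eq_smul
    (Gs.isSymm_adjMatrix.kroneckerSum Gb.isSymm_adjMatrix)
    (kroneckerSum_nonneg SimpleGraph.adjMatrix_nonneg SimpleGraph.adjMatrix_nonneg)
    (fun v => mul_pos (hws v.1) (hwb v.2)) (kroneckerSum_mulVec_mul_of_mulVec_eq_smul hGws hGwb)

/-- For the Levins-type metacommunity submodel, the metacommunity persistence capacity
computed on the Kronecker sum `A = A_s ⊗ I_m + I_n ⊗ A_b` of the adjacency matrices of
a connected spatial network and a connected interaction network equals `Λ_s + Λ_b`. -/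
theorem levinsType_capacity_eq_sum {n m : ℕ} (hn : 2 ≤ n) (hm : 2 ≤ m)
    (Gs : SimpleGraph (Fin n)) (Gb : SimpleGraph (Fin m))
    [DecidableRel Gs.Adj] [DecidableRel Gb.Adj]
    (hGs : Gs.Connected) (hGb : Gb.Connected)
    (A : Matrix (Fin n × Fin m) (Fin n × Fin m) ℝ)
    (hA : A = (Gs.adjMatrix ℝ) ⊗ₖ (1 : Matrix (Fin m) (Fin m) ℝ)
        + (1 : Matrix (Fin n) (Fin n) ℝ) ⊗ₖ (Gb.adjMatrix ℝ)) :
    (⨆ p : {p : (Fin n × Fin m) → ℝ // ∀ v, p v ∈ Set.Ioo (0:ℝ) 1},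
        ⨅ v, (A.mulVec p.1) v * (1 - p.1 v) / p.1 v)
      = sSup (spectrum ℝ (Gs.adjMatrix ℝ)) + sSup (spectrum ℝ (Gb.adjMatrix ℝ)) :=
  levinsType_capacity_eq_sum_general Gs Gb hGs hGb A hA
end

section
/- Let N ≥ 1, c, e > 0, and let C, E : [0,1]^N → ℝ^N be continuously differentiable functions such that: C_i(0) = 0 for all i; C_i(p) > 0 for all p in the open cube Ω = (0,1)^N; ∂C_i/∂p_j ≥ 0 on Ω for j ≠ i and ∂C_i/∂p_i = 0; E_i(p) > 0 for all p ∈ [0,1]^N; ∂E_i/∂p_j ≤ 0 on Ω for j ≠ i and ∂E_i/∂p_i = 0. Define g_i(p) = e C_i(p)/(c E_i(p)), assume every g_i is concave on Ω, and assume the model is irreducible: the 0-1 matrix J with J_{ij} = 1 iff ∂g_i/∂p_j(p) > 0 for all p ∈ Ω is irreducible. Let λ_M = sup over p ∈ Ω of min over i of g_i(p)(1 − p_i)/p_i. Then there exists a nontrivial equilibrium, i.e. a point p ∈ Ω with C_i(p)(1 − p_i) = E_i(p) p_i for all i, if and only if λ_M > e/c. -/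
/-!
If every ratio `g_i(q) (1 - q_i) / q_i` exceeds `e / c` at some interior point `q`, then
`q ≤ F q` for the map `F_i(p) = C_i(p) / (C_i(p) + E_i(p))`, whose fixed points are the
equilibria. `F` is monotone because `C` increases and `E` decreases in every coordinate, so the
iterates of `F` from `q` increase to a fixed point, which lies in the open cube since it
dominates `q` and `E > 0`. Conversely, at an equilibrium `p` all the ratios equal `e / c`;
concavity of `g_i` together with `g_i(0) = 0` gives `g_i(p / 2) ≥ g_i(p) / 2`, so at `p / 2`
every ratio is strictly larger. The supremum is finite because `g` is `C¹` on the closed cube and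
vanishes at `0`, so `g_j(q) ≤ L ‖q‖ = L q_j` at the largest coordinate `q_j` of `q`.
-/

open Set Filter Topology

section Monotonicity

variable {ι : Type*} [Fintype ι] [DecidableEq ι]

lemma ContinuousLinearMap.apply_nonneg_of_apply_single_nonneg (L : (ι → ℝ) →L[ℝ] ℝ)
    (hL : ∀ j, 0 ≤ L (Pi.single j 1)) {v : ι → ℝ} (hv : 0 ≤ v) : 0 ≤ L v := by
  rw [← Finset.univ_sum_single v, map_sum]
  refine Finset.sum_nonneg fun j _ => ?_
  rw [← mul_one (v j), ← smul_eq_mul, Pi.single_smul', map_smul, smul_eq_mul]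
  exact mul_nonneg (hv j) (hL j)

lemma monotoneOn_of_fderiv_apply_single_nonneg {s : Set (ι → ℝ)} {f : (ι → ℝ) → ℝ}
    (hs : Convex ℝ s) (hf : ∀ x ∈ s, DifferentiableAt ℝ f x)
    (hf' : ∀ x ∈ s, ∀ j, 0 ≤ fderiv ℝ f x (Pi.single j 1)) : MonotoneOn f s := by
  intro a ha b hb hab
  obtain ⟨z, hz, hfz⟩ :=
    domain_mvt (fun x hx => (hf x hx).hasFDerivAt.hasFDerivWithinAt) hs ha hb
  have := (fderiv ℝ f z).apply_nonneg_of_apply_single_nonneg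
    (hf' z (hs.segment_subset ha hb hz)) (sub_nonneg.2 hab)
  linarith

lemma antitoneOn_of_fderiv_apply_single_nonpos {s : Set (ι → ℝ)} {f : (ι → ℝ) → ℝ}
    (hs : Convex ℝ s) (hf : ∀ x ∈ s, DifferentiableAt ℝ f x)
    (hf' : ∀ x ∈ s, ∀ j, fderiv ℝ f x (Pi.single j 1) ≤ 0) : AntitoneOn f s := by
  intro a ha b hb hab
  obtain ⟨z, hz, hfz⟩ :=
    domain_mvt (fun x hx => (hf x hx).hasFDerivAt.hasFDerivWithinAt) hs ha hb
  have := (-fderiv ℝ f z).apply_nonneg_of_apply_single_nonneg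
    (fun j => neg_nonneg.2 (hf' z (hs.segment_subset ha hb hz) j)) (sub_nonneg.2 hab)
  rw [neg_apply] at this
  linarith

end Monotonicity

lemma mul_div_mul_mul_one_sub_div_eq {c e u v x : ℝ} (hc : c ≠ 0) (hv : v ≠ 0) (hx : x ≠ 0)
    (h : u * (1 - x) = v * x) : e * u / (c * v) * (1 - x) / x = e / c := by
  rw [show e * u / (c * v) * (1 - x) / x = e / c * (u * (1 - x) / (v * x)) by field_simp, h,
    div_self (mul_ne_zero hv hx), mul_one]

lemma div_lt_mul_div_mul_mul_one_sub_div_iff {c e u v x : ℝ} (hc : 0 < c) (he : 0 < e)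
    (hv : 0 < v) (hx : 0 < x) : e / c < e * u / (c * v) * (1 - x) / x ↔ v * x < u * (1 - x) := by
  rw [show e * u / (c * v) * (1 - x) / x = e / c * (u * (1 - x) / (v * x)) by field_simp,
    lt_mul_iff_one_lt_right (div_pos he hc), one_lt_div (mul_pos hv hx)]

lemma ConcaveOn.mul_le_apply_smul {E : Type*} [AddCommGroup E] [Module ℝ E] {s : Set E}
    {f : E → ℝ} (hf : ConcaveOn ℝ s f) {p : E} (hp : p ∈ s)
    (hray : ∀ t ∈ Ioo (0:ℝ) 1, t • p ∈ s)
    (hlim : Tendsto (fun t : ℝ => f (t • p)) (𝓝[>] 0) (𝓝 0)) {θ : ℝ} (hθ : θ ∈ Ioo (0:ℝ) 1) :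
    θ * f p ≤ f (θ • p) := by
  -- `θ • p` is a convex combination of `p` and `t • p` with weight `(θ - t) / (1 - t) → θ` on `p`
  have hcomb : ∀ᶠ t in 𝓝[>] 0,
      (θ - t) / (1 - t) * f p + (1 - (θ - t) / (1 - t)) * f (t • p) ≤ f (θ • p) := by
    filter_upwards [Ioo_mem_nhdsGT hθ.1] with t ht
    have h1t : 0 < 1 - t := by linarith [ht.2, hθ.2]
    have hpt : ((θ - t) / (1 - t)) • p + (1 - (θ - t) / (1 - t)) • t • p = θ • p := by
      rw [smul_smul, ← add_smul]
      congr 1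
      field_simp
      ring
    simpa only [hpt, smul_eq_mul] using
      hf.2 hp (hray t ⟨ht.1, by linarith [hθ.2, ht.2]⟩) (div_nonneg (sub_nonneg.2 ht.2.le) h1t.le)
        (sub_nonneg.2 ((div_le_one h1t).2 (by linarith [hθ.2]))) (add_sub_cancel _ _)
  have hweight : Tendsto (fun t : ℝ => (θ - t) / (1 - t)) (𝓝[>] 0) (𝓝 θ) := by
    have : ContinuousAt (fun t : ℝ => (θ - t) / (1 - t)) 0 :=
      (continuousAt_const.sub continuousAt_id).div (continuousAt_const.sub continuousAt_id)
        (by norm_num)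
    simpa using this.tendsto.mono_left nhdsWithin_le_nhds
  have hlim' := (hweight.mul (tendsto_const_nhds (x := f p))).add
    ((tendsto_const_nhds (x := (1:ℝ)).sub hweight).mul hlim)
  simpa using le_of_tendsto hlim' hcomb

lemma MonotoneOn.monotone_iterate_of_le_map {α : Type*} [Preorder α] {s : Set α} {F : α → α}
    (hF : MonotoneOn F s) (hmaps : MapsTo F s s) {q : α} (hq : q ∈ s) (hle : q ≤ F q) :
    Monotone fun n => F^[n] q := by
  refine monotone_nat_of_le_succ fun n => ?_
  induction n with
  | zero => exact hle
  | succ n ih =>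
    simpa only [Function.iterate_succ_apply'] using
      hF (hmaps.iterate n hq) (hmaps.iterate (n + 1) hq) ih

lemma MonotoneOn.exists_tendsto_iterate {α : Type*} [ConditionallyCompleteLattice α]
    [TopologicalSpace α] [SupConvergenceClass α] {s : Set α} {F : α → α}
    (hF : MonotoneOn F s) (hmaps : MapsTo F s s) (hs : BddAbove s) {q : α} (hq : q ∈ s)
    (hle : q ≤ F q) : ∃ P, q ≤ P ∧ Tendsto (fun n => F^[n] q) atTop (𝓝 P) := by
  have hbdd : BddAbove (range fun n => F^[n] q) :=
    hs.mono (range_subset_iff.2 fun n => hmaps.iterate n hq)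
  exact ⟨⨆ n, F^[n] q, le_ciSup hbdd 0,
    tendsto_atTop_ciSup (hF.monotone_iterate_of_le_map hmaps hq hle) hbdd⟩

lemma Convex.tendsto_apply_smul_nhdsGT_zero {E X : Type*} [AddCommGroup E] [Module ℝ E]
    [TopologicalSpace E] [ContinuousSMul ℝ E] [TopologicalSpace X] {s : Set E}
    (hs : Convex ℝ s) (h0 : 0 ∈ s) {p : E} (hp : p ∈ s) {f : E → X}
    (hf : ContinuousWithinAt f s 0) :
    Tendsto (fun t : ℝ => f (t • p)) (𝓝[>] 0) (𝓝 (f 0)) := by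
  refine hf.tendsto.comp (tendsto_nhdsWithin_iff.2 ⟨?_, ?_⟩)
  · exact ((continuous_id.smul continuous_const).tendsto' 0 0 (zero_smul ℝ p)).mono_left
      nhdsWithin_le_nhds
  · filter_upwards [Ioo_mem_nhdsGT one_pos] with t ht
    exact hs.smul_mem_of_zero_mem h0 hp ⟨ht.1.le, ht.2.le⟩

abbrev unitCube (ι : Type*) : Set (ι → ℝ) := univ.pi fun _ => Icc 0 1

abbrev openUnitCube (ι : Type*) : Set (ι → ℝ) := univ.pi fun _ => Ioo 0 1

section Cube

variable {ι : Type*}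

lemma convex_unitCube : Convex ℝ (unitCube ι) := convex_pi fun _ _ => convex_Icc 0 1

lemma convex_openUnitCube : Convex ℝ (openUnitCube ι) := convex_pi fun _ _ => convex_Ioo 0 1

lemma zero_mem_unitCube : (0 : ι → ℝ) ∈ unitCube ι := fun _ _ => ⟨le_rfl, zero_le_one⟩

lemma openUnitCube_subset_unitCube : openUnitCube ι ⊆ unitCube ι :=
  pi_mono fun _ _ => Ioo_subset_Icc_self

lemma ContDiffOn.differentiableAt_of_mem_openUnitCube [Fintype ι] {F : Type*}
    [NormedAddCommGroup F] [NormedSpace ℝ F] {f : (ι → ℝ) → F}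
    (hf : ContDiffOn ℝ 1 f (unitCube ι)) {p : ι → ℝ} (hp : p ∈ openUnitCube ι) :
    DifferentiableAt ℝ f p := by
  have hnhds : unitCube ι ∈ 𝓝 p := mem_of_superset
    ((isOpen_set_pi finite_univ fun _ _ => isOpen_Ioo).mem_nhds hp) openUnitCube_subset_unitCube
  exact (hf.differentiableOn one_ne_zero p (mem_of_mem_nhds hnhds)).differentiableAt hnhds

end Cube

lemma bddAbove_range_iInf_mul_one_sub_div {ι : Type*} [Fintype ι] [Nonempty ι]
    {g : ι → (ι → ℝ) → ℝ} (hg : ContDiffOn ℝ 1 (fun p i => g i p) (unitCube ι))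
    (hg0 : ∀ i, g i 0 = 0) :
    BddAbove (range fun p : {p : ι → ℝ // ∀ i, p i ∈ Ioo (0:ℝ) 1} =>
      ⨅ i, g i p.1 * (1 - p.1 i) / p.1 i) := by
  obtain ⟨L, hL⟩ := hg.exists_lipschitzOnWith one_ne_zero convex_unitCube
    (isCompact_univ_pi fun _ => isCompact_Icc)
  refine ⟨L, ?_⟩
  rintro _ ⟨⟨q, hq⟩, rfl⟩
  obtain ⟨j, -, hj⟩ := Finset.univ.exists_max_image q Finset.univ_nonempty
  have hqj : ‖q‖ ≤ q j := (pi_norm_le_iff_of_nonneg (hq j).1.le).2 fun i => by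
    rw [Real.norm_of_nonneg (hq i).1.le]
    exact hj i (Finset.mem_univ i)
  have hgq : g j q ≤ L * q j := calc
    g j q ≤ ‖fun i => g i q‖ := (le_abs_self _).trans (norm_le_pi_norm (fun i => g i q) j)
    _ = ‖(fun i => g i q) - fun i => g i 0‖ := by simp only [hg0]; rw [← Pi.zero_def, sub_zero]
    _ ≤ L * ‖q - 0‖ := lipschitzOnWith_iff_norm_sub_le.1 hL
      (openUnitCube_subset_unitCube fun i _ => hq i) zero_mem_unitCube
    _ ≤ L * q j := by rw [sub_zero]; gcongr
  calc ⨅ i, g i q * (1 - q i) / q i ≤ g j q * (1 - q j) / q j :=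
        ciInf_le (Finite.bddBelow_range _) j
    _ ≤ L := by
        rw [div_le_iff₀ (hq j).1]
        rcases le_total 0 (g j q) with h | h
        · nlinarith [mul_nonneg h (hq j).1.le]
        · nlinarith [mul_nonneg L.2 (hq j).1.le,
            mul_nonpos_of_nonpos_of_nonneg h (sub_nonneg.2 (hq j).2.le)]

lemma exists_forall_lt_mul_one_sub_div {ι : Type*} {g : ι → (ι → ℝ) → ℝ}
    (hconc : ∀ i, ConcaveOn ℝ (openUnitCube ι) (g i))
    (hcont : ∀ i, ContinuousWithinAt (g i) (unitCube ι) 0) (hg0 : ∀ i, g i 0 = 0)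
    {p : ι → ℝ} (hp : ∀ i, p i ∈ Ioo (0:ℝ) 1) {a : ℝ} (ha : 0 < a)
    (heq : ∀ i, g i p * (1 - p i) / p i = a) :
    ∃ q : ι → ℝ, (∀ i, q i ∈ Ioo (0:ℝ) 1) ∧ ∀ i, a < g i q * (1 - q i) / q i := by
  have hray : ∀ t ∈ Ioo (0:ℝ) 1, ∀ i, t * p i ∈ Ioo (0:ℝ) 1 := fun t ht i =>
    ⟨mul_pos ht.1 (hp i).1, mul_lt_one_of_nonneg_of_lt_one_left ht.1.le ht.2 (hp i).2.le⟩
  have hhalf : (1/2 : ℝ) ∈ Ioo (0:ℝ) 1 := ⟨by norm_num, by norm_num⟩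
  refine ⟨(1/2 : ℝ) • p, hray _ hhalf, fun i => ?_⟩
  have hlim : Tendsto (fun t : ℝ => g i (t • p)) (𝓝[>] 0) (𝓝 0) := hg0 i ▸
    convex_unitCube.tendsto_apply_smul_nhdsGT_zero zero_mem_unitCube
      (openUnitCube_subset_unitCube fun k _ => hp k) (hcont i)
  have hconc_half : 1/2 * g i p ≤ g i ((1/2 : ℝ) • p) := ConcaveOn.mul_le_apply_smul (hconc i)
    (fun j _ => hp j) (fun t ht j _ => hray t ht j) hlim hhalf
  have hp0 := (hp i).1
  have hgp : 0 < g i p := by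
    have : 0 < g i p * (1 - p i) := (div_pos_iff_of_pos_right hp0).1 (heq i ▸ ha)
    exact (pos_iff_pos_of_mul_pos this).2 (sub_pos.2 (hp i).2)
  calc a = g i p * (1 - p i) / p i := (heq i).symm
    _ < g i p * (1 - 1/2 * p i) / p i := by gcongr; linarith
    _ = 1/2 * g i p * (1 - 1/2 * p i) / (1/2 * p i) := by field_simp
    _ ≤ g i ((1/2 : ℝ) • p) * (1 - ((1/2 : ℝ) • p) i) / ((1/2 : ℝ) • p) i := by
        simp only [Pi.smul_apply, smul_eq_mul]
        gcongr
        linarith [(hp i).2]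

section Model

variable {ι : Type*} [Fintype ι] [DecidableEq ι] {C E : (ι → ℝ) → ι → ℝ}

lemma monotoneOn_apply_openUnitCube (hC : ContDiffOn ℝ 1 C (unitCube ι))
    (hCmono : ∀ p : ι → ℝ, (∀ i, p i ∈ Ioo (0:ℝ) 1) → ∀ i j, i ≠ j →
      0 ≤ fderiv ℝ (fun q => C q i) p (Pi.single j 1))
    (hCself : ∀ p : ι → ℝ, (∀ i, p i ∈ Ioo (0:ℝ) 1) → ∀ i,
      fderiv ℝ (fun q => C q i) p (Pi.single i 1) = 0) (i : ι) :
    MonotoneOn (fun q => C q i) (openUnitCube ι) := by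
  refine monotoneOn_of_fderiv_apply_single_nonneg convex_openUnitCube
    (fun p hp => differentiableAt_pi.1 (hC.differentiableAt_of_mem_openUnitCube hp) i)
    fun p hp j => ?_
  rcases eq_or_ne i j with rfl | hij
  · exact (hCself p (fun k => hp k (mem_univ k)) i).ge
  · exact hCmono p (fun k => hp k (mem_univ k)) i j hij

lemma antitoneOn_apply_openUnitCube (hE : ContDiffOn ℝ 1 E (unitCube ι))
    (hEmono : ∀ p : ι → ℝ, (∀ i, p i ∈ Ioo (0:ℝ) 1) → ∀ i j, i ≠ j →
      fderiv ℝ (fun q => E q i) p (Pi.single j 1) ≤ 0)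
    (hEself : ∀ p : ι → ℝ, (∀ i, p i ∈ Ioo (0:ℝ) 1) → ∀ i,
      fderiv ℝ (fun q => E q i) p (Pi.single i 1) = 0) (i : ι) :
    AntitoneOn (fun q => E q i) (openUnitCube ι) := by
  refine antitoneOn_of_fderiv_apply_single_nonpos convex_openUnitCube
    (fun p hp => differentiableAt_pi.1 (hE.differentiableAt_of_mem_openUnitCube hp) i)
    fun p hp j => ?_
  rcases eq_or_ne i j with rfl | hij
  · exact (hEself p (fun k => hp k (mem_univ k)) i).le
  · exact hEmono p (fun k => hp k (mem_univ k)) i j hij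

end Model

section Equilibrium

variable {ι : Type*} {C E : (ι → ℝ) → ι → ℝ}

/-- Equilibria `C_i(p) (1 - p_i) = E_i(p) p_i` are the fixed points of this map. -/
noncomputable def equilibriumMap (C E : (ι → ℝ) → ι → ℝ) (p : ι → ℝ) : ι → ℝ :=
  fun i => C p i / (C p i + E p i)

lemma mapsTo_equilibriumMap (hCpos : ∀ p : ι → ℝ, (∀ i, p i ∈ Ioo (0:ℝ) 1) → ∀ i, 0 < C p i)
    (hEpos : ∀ p : ι → ℝ, (∀ i, p i ∈ Icc (0:ℝ) 1) → ∀ i, 0 < E p i) :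
    MapsTo (equilibriumMap C E) (openUnitCube ι) (openUnitCube ι) := by
  intro p hp i _
  have hC := hCpos p (fun k => hp k (mem_univ k)) i
  have hE := hEpos p (fun k => Ioo_subset_Icc_self (hp k (mem_univ k))) i
  exact ⟨by unfold equilibriumMap; positivity, (div_lt_one (by positivity)).2 (by linarith)⟩

lemma monotoneOn_equilibriumMap (hCpos : ∀ p : ι → ℝ, (∀ i, p i ∈ Ioo (0:ℝ) 1) → ∀ i, 0 < C p i)
    (hEpos : ∀ p : ι → ℝ, (∀ i, p i ∈ Icc (0:ℝ) 1) → ∀ i, 0 < E p i)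
    (hCmono : ∀ i, MonotoneOn (fun p => C p i) (openUnitCube ι))
    (hEanti : ∀ i, AntitoneOn (fun p => E p i) (openUnitCube ι)) :
    MonotoneOn (equilibriumMap C E) (openUnitCube ι) := by
  intro a ha b hb hab i
  have hCa := hCpos a (fun k => ha k (mem_univ k)) i
  have hEb := hEpos b (fun k => Ioo_subset_Icc_self (hb k (mem_univ k))) i
  have hC : C a i ≤ C b i := hCmono i ha hb hab
  have hE : E b i ≤ E a i := hEanti i ha hb hab
  simp only [equilibriumMap]
  rw [div_le_div_iff₀ (by linarith) (by linarith)]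
  nlinarith

lemma equilibriumMap_mul_add (hCpos : ∀ p : ι → ℝ, (∀ i, p i ∈ Ioo (0:ℝ) 1) → ∀ i, 0 < C p i)
    (hEpos : ∀ p : ι → ℝ, (∀ i, p i ∈ Icc (0:ℝ) 1) → ∀ i, 0 < E p i)
    {p : ι → ℝ} (hp : p ∈ openUnitCube ι) (i : ι) :
    equilibriumMap C E p i * (C p i + E p i) = C p i := by
  have hC := hCpos p (fun k => hp k (mem_univ k)) i
  have hE := hEpos p (fun k => Ioo_subset_Icc_self (hp k (mem_univ k))) i
  exact div_mul_cancel₀ _ (by positivity)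

lemma exists_equilibrium_of_lt (hCpos : ∀ p : ι → ℝ, (∀ i, p i ∈ Ioo (0:ℝ) 1) → ∀ i, 0 < C p i)
    (hEpos : ∀ p : ι → ℝ, (∀ i, p i ∈ Icc (0:ℝ) 1) → ∀ i, 0 < E p i)
    (hCc : ContinuousOn C (unitCube ι)) (hEc : ContinuousOn E (unitCube ι))
    (hCmono : ∀ i, MonotoneOn (fun p => C p i) (openUnitCube ι))
    (hEanti : ∀ i, AntitoneOn (fun p => E p i) (openUnitCube ι))
    {q : ι → ℝ} (hq : ∀ i, q i ∈ Ioo (0:ℝ) 1) (hlt : ∀ i, E q i * q i < C q i * (1 - q i)) :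
    ∃ p : ι → ℝ, (∀ i, p i ∈ Ioo (0:ℝ) 1) ∧ ∀ i, C p i * (1 - p i) = E p i * p i := by
  set F := equilibriumMap C E
  have hmaps := mapsTo_equilibriumMap hCpos hEpos
  have hqF : q ≤ F q := fun i => by
    have := hCpos q hq i
    have := hEpos q (fun k => Ioo_subset_Icc_self (hq k)) i
    rw [show F q i = C q i / (C q i + E q i) from rfl, le_div_iff₀ (by positivity)]
    linarith [hlt i]
  have hbdd : BddAbove (openUnitCube ι) := ⟨1, fun p hp i => (hp i (mem_univ i)).2.le⟩
  obtain ⟨P, hqP, hP⟩ := MonotoneOn.exists_tendsto_iterate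
    (monotoneOn_equilibriumMap hCpos hEpos hCmono hEanti) hmaps hbdd (fun i _ => hq i) hqF
  have hs : ∀ n, F^[n] q ∈ openUnitCube ι := fun n => hmaps.iterate n fun i _ => hq i
  have hsK : ∀ᶠ n in atTop, F^[n] q ∈ unitCube ι :=
    .of_forall fun n => openUnitCube_subset_unitCube (hs n)
  have hPK : P ∈ unitCube ι := (isClosed_set_pi fun _ _ => isClosed_Icc).mem_of_tendsto hP hsK
  have hPK' := tendsto_nhdsWithin_iff.2 ⟨hP, hsK⟩
  -- passing to the limit in `p_{n+1,i} (C_i(p_n) + E_i(p_n)) = C_i(p_n)` avoids dividing by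
  -- `C_i(P) + E_i(P)`
  have hfix : ∀ i, P i * (C P i + E P i) = C P i := by
    intro i
    have hC := tendsto_pi_nhds.1 ((hCc P hPK).tendsto.comp hPK') i
    have hE := tendsto_pi_nhds.1 ((hEc P hPK).tendsto.comp hPK') i
    have hnext := (tendsto_pi_nhds.1 hP i).comp (tendsto_add_atTop_nat 1)
    refine tendsto_nhds_unique ((hnext.mul (hC.add hE)).congr fun n => ?_) hC
    simp only [Function.comp_apply, Function.iterate_succ_apply']
    exact equilibriumMap_mul_add hCpos hEpos (hs n) i
  have hEP := hEpos P fun i => hPK i (mem_univ i)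
  refine ⟨P, fun i => ⟨(hq i).1.trans_le (hqP i), (hPK i (mem_univ i)).2.lt_of_ne fun h1 => ?_⟩,
    fun i => by linear_combination -(hfix i)⟩
  have := hfix i
  rw [h1] at this
  linarith [hEP i]

end Equilibrium

theorem ovaskainen_hanski_threshold_general {N : ℕ} (hN : 1 ≤ N)
    (c e : ℝ) (hc : 0 < c) (he : 0 < e)
    (C E : (Fin N → ℝ) → (Fin N → ℝ))
    (hCsmooth : ContDiffOn ℝ 1 C (Set.univ.pi fun _ : Fin N => Set.Icc (0:ℝ) 1))
    (hEsmooth : ContDiffOn ℝ 1 E (Set.univ.pi fun _ : Fin N => Set.Icc (0:ℝ) 1))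
    (hC0 : C 0 = 0)
    (hCpos : ∀ p : Fin N → ℝ, (∀ i, p i ∈ Set.Ioo (0:ℝ) 1) → ∀ i, 0 < C p i)
    (hCmono : ∀ p : Fin N → ℝ, (∀ i, p i ∈ Set.Ioo (0:ℝ) 1) → ∀ i j, i ≠ j →
      0 ≤ fderiv ℝ (fun q => C q i) p (Pi.single j 1))
    (hCself : ∀ p : Fin N → ℝ, (∀ i, p i ∈ Set.Ioo (0:ℝ) 1) → ∀ i,
      fderiv ℝ (fun q => C q i) p (Pi.single i 1) = 0)
    (hEpos : ∀ p : Fin N → ℝ, (∀ i, p i ∈ Set.Icc (0:ℝ) 1) → ∀ i, 0 < E p i)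
    (hEmono : ∀ p : Fin N → ℝ, (∀ i, p i ∈ Set.Ioo (0:ℝ) 1) → ∀ i j, i ≠ j →
      fderiv ℝ (fun q => E q i) p (Pi.single j 1) ≤ 0)
    (hEself : ∀ p : Fin N → ℝ, (∀ i, p i ∈ Set.Ioo (0:ℝ) 1) → ∀ i,
      fderiv ℝ (fun q => E q i) p (Pi.single i 1) = 0)
    (g : Fin N → (Fin N → ℝ) → ℝ)
    (hg : ∀ i p, g i p = e * C p i / (c * E p i))
    (hconc : ∀ i, ConcaveOn ℝ (Set.univ.pi fun _ : Fin N => Set.Ioo (0:ℝ) 1) (g i)) :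
    (∃ p : Fin N → ℝ, (∀ i, p i ∈ Set.Ioo (0:ℝ) 1) ∧
        ∀ i, C p i * (1 - p i) = E p i * p i) ↔
      e / c < ⨆ p : {p : Fin N → ℝ // ∀ i, p i ∈ Set.Ioo (0:ℝ) 1},
        ⨅ i, g i p.1 * (1 - p.1 i) / p.1 i := by
  have : Nonempty (Fin N) := Fin.pos_iff_nonempty.1 hN
  have : Nonempty {p : Fin N → ℝ // ∀ i, p i ∈ Ioo (0:ℝ) 1} :=
    ⟨⟨fun _ => 1/2, fun _ => ⟨by norm_num, by norm_num⟩⟩⟩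
  have hEpos' : ∀ p : Fin N → ℝ, (∀ i, p i ∈ Ioo (0:ℝ) 1) → ∀ i, 0 < E p i := fun p hp =>
    hEpos p fun k => Ioo_subset_Icc_self (hp k)
  have hgC1 : ContDiffOn ℝ 1 (fun p i => g i p) (unitCube (Fin N)) := by
    simp only [hg]
    exact contDiffOn_pi.2 fun i => (contDiffOn_const.mul (contDiffOn_pi.1 hCsmooth i)).div
      (contDiffOn_const.mul (contDiffOn_pi.1 hEsmooth i))
      fun p hp => (mul_pos hc (hEpos p (fun k => hp k (mem_univ k)) i)).ne'
  have hg0 : ∀ i, g i 0 = 0 := fun i => by rw [hg, hC0, Pi.zero_apply, mul_zero, zero_div]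
  constructor
  · rintro ⟨p, hp, heq⟩
    obtain ⟨q, hq, hlt⟩ := exists_forall_lt_mul_one_sub_div hconc
      (fun i => (continuous_apply i).comp_continuousOn hgC1.continuousOn 0 zero_mem_unitCube)
      hg0 hp (div_pos he hc) fun i => by
        rw [hg]
        exact mul_div_mul_mul_one_sub_div_eq hc.ne' (hEpos' p hp i).ne' (hp i).1.ne' (heq i)
    obtain ⟨i, hi⟩ := exists_eq_ciInf_of_finite (f := fun i => g i q * (1 - q i) / q i)
    exact (hi ▸ hlt i).trans_le (le_ciSup (bddAbove_range_iInf_mul_one_sub_div hgC1 hg0) ⟨q, hq⟩)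
  · intro hsup
    obtain ⟨⟨q, hq⟩, hlt⟩ := exists_lt_of_lt_ciSup hsup
    refine exists_equilibrium_of_lt hCpos hEpos hCsmooth.continuousOn hEsmooth.continuousOn
      (monotoneOn_apply_openUnitCube hCsmooth hCmono hCself)
      (antitoneOn_apply_openUnitCube hEsmooth hEmono hEself) hq fun i => ?_
    have hlti := hlt.trans_le (ciInf_le (Finite.bddBelow_range _) i)
    rwa [hg, div_lt_mul_div_mul_mul_one_sub_div_iff hc he (hEpos' q hq i) (hq i).1] at hlti

/-- Ovaskainen–Hanski theorem (weak, concave case): under the standard assumptions on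
the colonisation and extinction functions, concavity of all components of `g` and
irreducibility of the model, a nontrivial (interior) equilibrium
`C_i(p)(1 - p_i) = E_i(p) p_i` exists if and only if the persistence capacity
`λ_M = sup_{p ∈ Ω} min_i g_i(p)(1 - p_i)/p_i` satisfies `λ_M > e/c`. -/
theorem ovaskainen_hanski_threshold {N : ℕ} (hN : 1 ≤ N)
    (c e : ℝ) (hc : 0 < c) (he : 0 < e)
    (C E : (Fin N → ℝ) → (Fin N → ℝ))
    (hCsmooth : ContDiffOn ℝ 1 C (Set.univ.pi fun _ : Fin N => Set.Icc (0:ℝ) 1))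
    (hEsmooth : ContDiffOn ℝ 1 E (Set.univ.pi fun _ : Fin N => Set.Icc (0:ℝ) 1))
    (hC0 : C 0 = 0)
    (hCpos : ∀ p : Fin N → ℝ, (∀ i, p i ∈ Set.Ioo (0:ℝ) 1) → ∀ i, 0 < C p i)
    (hCmono : ∀ p : Fin N → ℝ, (∀ i, p i ∈ Set.Ioo (0:ℝ) 1) → ∀ i j, i ≠ j →
      0 ≤ fderiv ℝ (fun q => C q i) p (Pi.single j 1))
    (hCself : ∀ p : Fin N → ℝ, (∀ i, p i ∈ Set.Ioo (0:ℝ) 1) → ∀ i,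
      fderiv ℝ (fun q => C q i) p (Pi.single i 1) = 0)
    (hEpos : ∀ p : Fin N → ℝ, (∀ i, p i ∈ Set.Icc (0:ℝ) 1) → ∀ i, 0 < E p i)
    (hEmono : ∀ p : Fin N → ℝ, (∀ i, p i ∈ Set.Ioo (0:ℝ) 1) → ∀ i j, i ≠ j →
      fderiv ℝ (fun q => E q i) p (Pi.single j 1) ≤ 0)
    (hEself : ∀ p : Fin N → ℝ, (∀ i, p i ∈ Set.Ioo (0:ℝ) 1) → ∀ i,
      fderiv ℝ (fun q => E q i) p (Pi.single i 1) = 0)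
    (g : Fin N → (Fin N → ℝ) → ℝ)
    (hg : ∀ i p, g i p = e * C p i / (c * E p i))
    (hconc : ∀ i, ConcaveOn ℝ (Set.univ.pi fun _ : Fin N => Set.Ioo (0:ℝ) 1) (g i))
    (J : Matrix (Fin N) (Fin N) ℝ)
    (hJ1 : ∀ i j, (∀ p : Fin N → ℝ, (∀ k, p k ∈ Set.Ioo (0:ℝ) 1) →
      0 < fderiv ℝ (g i) p (Pi.single j 1)) → J i j = 1)
    (hJ0 : ∀ i j, ¬ (∀ p : Fin N → ℝ, (∀ k, p k ∈ Set.Ioo (0:ℝ) 1) →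
      0 < fderiv ℝ (g i) p (Pi.single j 1)) → J i j = 0)
    (hJirr : ∀ u v : Fin N, ∃ k : ℕ, 1 ≤ k ∧ 0 < (J ^ k) u v) :
    (∃ p : Fin N → ℝ, (∀ i, p i ∈ Set.Ioo (0:ℝ) 1) ∧
        ∀ i, C p i * (1 - p i) = E p i * p i) ↔
      e / c < ⨆ p : {p : Fin N → ℝ // ∀ i, p i ∈ Set.Ioo (0:ℝ) 1},
        ⨅ i, g i p.1 * (1 - p.1 i) / p.1 i :=
  ovaskainen_hanski_threshold_general hN c e hc he C E hCsmooth hEsmooth hC0 hCpos hCmono hCself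
    hEpos hEmono hEself g hg hconc
end

section
/- Let G be a connected simple graph on n ≥ 2 vertices with adjacency matrix A and largest eigenvalue Λ_s, and let c, e ∈ (0,1). Then there exists p ∈ (0,1)^n with c (A p)_i (1 − p_i) = e p_i for every i (a nontrivial equilibrium of the spatially realistic Levins metapopulation model) if and only if Λ_s > e/c. -/
/-!
(⇒) At an equilibrium `p ∈ (0,1)ⁿ`, `e pᵢ = c (Ap)ᵢ (1 - pᵢ) < c (Ap)ᵢ`, so
`(e/c) ‖p‖² < ⟪p, Ap⟫ ≤ Λ_s ‖p‖²` by the Rayleigh bound for the symmetric matrix `A`.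

(⇐) Equilibria are the fixed points of the monotone map `F(x)ᵢ = c (Ax)ᵢ / (c (Ax)ᵢ + e)`.
If `v = |w|` for a `Λ_s`-eigenvector `w` normalised to `max |wᵢ| = 1`, then `Av ≥ Λ_s v`, and for
`δ = 1 - e/(c Λ_s) > 0` the vector `δ v` is a subsolution, `δ v ≤ F(δ v)`. Hence `F` maps the box
`[δ v, 1]` into itself and Knaster–Tarski gives a fixed point `p ≥ δ v`, `p ≠ 0`. As `pᵢ > 0`
forces `pⱼ = F(p)ⱼ > 0` at every neighbour `j` of `i`, connectivity makes `p` positive.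
-/

open Matrix Set

namespace Matrix

variable {ι : Type*} [Fintype ι] {A : Matrix ι ι ℝ}

theorem mulVec_mono_of_nonneg (hA : ∀ i j, 0 ≤ A i j) {x y : ι → ℝ} (hxy : x ≤ y) :
    A *ᵥ x ≤ A *ᵥ y := fun i =>
  Finset.sum_le_sum fun j _ => mul_le_mul_of_nonneg_left (hxy j) (hA i j)

theorem mulVec_nonneg_of_nonneg (hA : ∀ i j, 0 ≤ A i j) {x : ι → ℝ} (hx : 0 ≤ x) :
    0 ≤ A *ᵥ x := by
  simpa using mulVec_mono_of_nonneg hA hx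

theorem abs_mulVec_le_of_nonneg (hA : ∀ i j, 0 ≤ A i j) (x : ι → ℝ) :
    |A *ᵥ x| ≤ A *ᵥ |x| := fun i => by
  simp only [Pi.abs_apply, mulVec, dotProduct]
  refine (Finset.abs_sum_le_sum_abs _ _).trans_eq (Finset.sum_congr rfl fun j _ => ?_)
  rw [abs_mul, abs_of_nonneg (hA i j)]

theorem exists_nonneg_smul_le_mulVec (hA : ∀ i j, 0 ≤ A i j) {μ : ℝ} (hμ : 0 ≤ μ) {w : ι → ℝ}
    (hw0 : w ≠ 0) (hw : A *ᵥ w = μ • w) : ∃ v, 0 ≤ v ∧ v ≠ 0 ∧ v ≤ 1 ∧ μ • v ≤ A *ᵥ v := by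
  set u := ‖w‖⁻¹ • w
  have hu : A *ᵥ u = μ • u := by rw [mulVec_smul, hw, smul_comm]
  refine ⟨|u|, abs_nonneg u, ?_, fun i => ?_, ?_⟩
  · exact (Pi.abs_eq_zero u).not.mpr (smul_ne_zero (inv_ne_zero (norm_ne_zero_iff.mpr hw0)) hw0)
  · exact (norm_le_pi_norm u i).trans_eq (norm_smul_inv_norm hw0)
  · intro i
    simpa [hu, abs_mul, abs_of_nonneg hμ] using abs_mulVec_le_of_nonneg hA u i

variable [DecidableEq ι]

theorem exists_mulVec_eq_smul_of_mem_spectrum {μ : ℝ} (hμ : μ ∈ spectrum ℝ A) :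
    ∃ v ≠ 0, A *ᵥ v = μ • v := by
  rw [← spectrum_toLin', ← Module.End.hasEigenvalue_iff_mem_spectrum] at hμ
  obtain ⟨v, hv, hv0⟩ := hμ.exists_hasEigenvector
  exact ⟨v, hv0, by simpa using Module.End.mem_eigenspace_iff.mp hv⟩

theorem IsHermitian.sSup_spectrum_mem_s15 [Nonempty ι] (hA : A.IsHermitian) :
    sSup (spectrum ℝ A) ∈ spectrum ℝ A := by
  rw [hA.spectrum_real_eq_range_eigenvalues]
  exact (range_nonempty _).csSup_mem (finite_range _)

theorem IsHermitian.dotProduct_mulVec_le (hA : A.IsHermitian) (x : ι → ℝ) :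
    x ⬝ᵥ A *ᵥ x ≤ sSup (spectrum ℝ A) * (x ⬝ᵥ x) := by
  set Λ := sSup (spectrum ℝ A)
  have hbdd : BddAbove (spectrum ℝ A) := A.finite_real_spectrum.bddAbove
  have hpsd : (algebraMap ℝ (Matrix ι ι ℝ) Λ - A).PosSemidef := by
    refine posSemidef_iff_isHermitian_and_spectrum_nonneg.mpr ⟨?_, ?_⟩
    · exact (isHermitian_iff_isSymm.mpr (isSymm_diagonal _)).sub hA
    · rw [← spectrum.singleton_sub_eq]
      rintro _ ⟨_, rfl, ν, hν, rfl⟩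
      exact sub_nonneg.mpr (le_csSup hbdd hν)
  have := hpsd.dotProduct_mulVec_nonneg x
  simp only [star_trivial, Algebra.algebraMap_eq_smul_one, sub_mulVec, smul_mulVec, one_mulVec,
    dotProduct_sub, dotProduct_smul, smul_eq_mul, sub_nonneg] at this
  linarith

theorem IsHermitian.lt_sSup_spectrum_of_forall_mul_lt_mulVec [Nonempty ι] (hA : A.IsHermitian)
    {r : ℝ} {x : ι → ℝ} (hx : ∀ i, 0 < x i) (hr : ∀ i, r * x i < (A *ᵥ x) i) :
    r < sSup (spectrum ℝ A) := by
  have hxx : 0 < x ⬝ᵥ x := Finset.sum_pos (fun i _ => mul_pos (hx i) (hx i)) Finset.univ_nonempty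
  have hrx : r * (x ⬝ᵥ x) < x ⬝ᵥ A *ᵥ x := by
    rw [dotProduct, dotProduct, Finset.mul_sum]
    refine Finset.sum_lt_sum_of_nonempty Finset.univ_nonempty fun i _ => ?_
    rw [mul_left_comm]
    exact mul_lt_mul_of_pos_left (hr i) (hx i)
  exact lt_of_mul_lt_mul_right (hrx.trans_le (hA.dotProduct_mulVec_le x)) hxx.le

end Matrix

theorem exists_fixedPoint_of_mapsTo_Icc {α : Type*} [ConditionallyCompleteLattice α]
    {f : α → α} {a b : α} (hab : a ≤ b) (hf : MonotoneOn f (Icc a b))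
    (hmaps : MapsTo f (Icc a b) (Icc a b)) : ∃ x ∈ Icc a b, f x = x := by
  have : Fact (a ≤ b) := ⟨hab⟩
  let F : Icc a b →o Icc a b := ⟨hmaps.restrict, fun x y hxy => hf x.2 y.2 hxy⟩
  exact ⟨F.lfp, F.lfp.2, congrArg Subtype.val F.map_lfp⟩

theorem SimpleGraph.Reachable.of_forall_adj_imp {V : Type*} {G : SimpleGraph V} {P : V → Prop}
    (hP : ∀ u v, G.Adj u v → P u → P v) {u v : V} (h : G.Reachable u v) : P u → P v := by
  obtain ⟨w⟩ := h
  induction w with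
  | nil => exact id
  | cons huv _ ih => exact fun hu => ih (hP _ _ huv hu)

/-- `c t (1 - p) = e p` solved for `p`, so that the equilibria of the Levins model are the fixed
points of `levinsMap`. -/
noncomputable def levinsResponse (c e t : ℝ) : ℝ := c * t / (c * t + e)

section levinsResponse

variable {c e : ℝ}

theorem levinsResponse_pos (hc : 0 < c) (he : 0 < e) {t : ℝ} (ht : 0 < t) :
    0 < levinsResponse c e t := by
  unfold levinsResponse; positivity

theorem levinsResponse_lt_one (hc : 0 < c) (he : 0 < e) {t : ℝ} (ht : 0 ≤ t) :
    levinsResponse c e t < 1 := by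
  unfold levinsResponse
  rw [div_lt_one (by positivity)]
  linarith

theorem levinsResponse_monotoneOn (hc : 0 < c) (he : 0 < e) :
    MonotoneOn (levinsResponse c e) (Ici 0) := by
  intro s (hs : 0 ≤ s) t (ht : 0 ≤ t) hst
  unfold levinsResponse
  rw [div_le_div_iff₀ (by positivity) (by positivity)]
  nlinarith [mul_pos hc he]

theorem le_levinsResponse_mul (hc : 0 < c) (he : 0 < e) {μ s : ℝ} (hμ : e / c < μ)
    (hs : 0 ≤ s) (hsμ : s ≤ 1 - e / (c * μ)) : s ≤ levinsResponse c e (μ * s) := by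
  have hcμ : e < c * μ := by rwa [div_lt_iff₀' hc] at hμ
  have hcμ0 : 0 < c * μ := he.trans hcμ
  have hsμ' : s * (c * μ) ≤ c * μ - e :=
    calc s * (c * μ) ≤ (1 - e / (c * μ)) * (c * μ) := by gcongr
      _ = c * μ - e := by rw [sub_mul, div_mul_cancel₀ _ hcμ0.ne', one_mul]
  unfold levinsResponse
  rw [le_div_iff₀ (by nlinarith)]
  nlinarith

theorem mul_one_sub_eq_of_levinsResponse_eq (hc : 0 < c) (he : 0 < e) {t p : ℝ} (ht : 0 ≤ t)
    (h : levinsResponse c e t = p) : c * t * (1 - p) = e * p := by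
  have : c * t + e ≠ 0 := by positivity
  subst h
  unfold levinsResponse
  field_simp
  ring

theorem div_mul_lt_of_mul_one_sub_eq (hc : 0 < c) (he : 0 < e) {t p : ℝ} (hp : p ∈ Ioo 0 1)
    (h : c * t * (1 - p) = e * p) : e / c * p < t := by
  obtain ⟨hp0, hp1⟩ := hp
  have ht : 0 < t := by
    by_contra! ht
    nlinarith [mul_pos he hp0, mul_nonneg (mul_nonneg hc.le (neg_nonneg.2 ht)) (sub_nonneg.2 hp1.le)]
  rw [div_mul_eq_mul_div, div_lt_iff₀ hc]
  nlinarith [mul_pos (mul_pos hc ht) hp0]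

end levinsResponse

noncomputable def levinsMap {ι : Type*} [Fintype ι] (A : Matrix ι ι ℝ) (c e : ℝ) (x : ι → ℝ) :
    ι → ℝ :=
  fun i => levinsResponse c e ((A *ᵥ x) i)

section levinsMap

variable {ι : Type*} [Fintype ι] {A : Matrix ι ι ℝ} {c e : ℝ}

theorem levinsMap_lt_one (hA : ∀ i j, 0 ≤ A i j) (hc : 0 < c) (he : 0 < e) {x : ι → ℝ}
    (hx : 0 ≤ x) (i : ι) : levinsMap A c e x i < 1 :=
  levinsResponse_lt_one hc he (mulVec_nonneg_of_nonneg hA hx i)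

theorem levinsMap_monotoneOn (hA : ∀ i j, 0 ≤ A i j) (hc : 0 < c) (he : 0 < e) :
    MonotoneOn (levinsMap A c e) (Ici 0) := fun x (hx : 0 ≤ x) y (hy : 0 ≤ y) hxy i =>
  levinsResponse_monotoneOn hc he (mulVec_nonneg_of_nonneg hA hx i)
    (mulVec_nonneg_of_nonneg hA hy i) (mulVec_mono_of_nonneg hA hxy i)

theorem smul_le_levinsMap_smul (hc : 0 < c) (he : 0 < e) {μ δ : ℝ}
    (hμ : e / c < μ) (hδ0 : 0 ≤ δ) (hδ : δ ≤ 1 - e / (c * μ)) {v : ι → ℝ} (hv : 0 ≤ v)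
    (hv1 : v ≤ 1) (hAv : μ • v ≤ A *ᵥ v) : δ • v ≤ levinsMap A c e (δ • v) := by
  have hμ0 : 0 < μ := (div_pos he hc).trans hμ
  intro i
  have hδv : 0 ≤ δ * v i := mul_nonneg hδ0 (hv i)
  have hAδv : μ * (δ * v i) ≤ (A *ᵥ (δ • v)) i := by
    rw [mulVec_smul, Pi.smul_apply, smul_eq_mul, mul_left_comm]
    exact mul_le_mul_of_nonneg_left (hAv i) hδ0
  have hμδv : 0 ≤ μ * (δ * v i) := mul_nonneg hμ0.le hδv
  calc δ * v i ≤ levinsResponse c e (μ * (δ * v i)) :=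
        le_levinsResponse_mul hc he hμ hδv ((mul_le_of_le_one_right hδ0 (hv1 i)).trans hδ)
    _ ≤ levinsMap A c e (δ • v) i :=
        levinsResponse_monotoneOn hc he hμδv (hμδv.trans hAδv) hAδv

theorem exists_levinsMap_fixedPoint (hA : ∀ i j, 0 ≤ A i j) (hc : 0 < c) (he : 0 < e) {μ : ℝ}
    (hμ : e / c < μ) {v : ι → ℝ} (hv : 0 ≤ v) (hv0 : v ≠ 0) (hv1 : v ≤ 1)
    (hAv : μ • v ≤ A *ᵥ v) : ∃ p, 0 ≤ p ∧ p ≠ 0 ∧ levinsMap A c e p = p := by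
  set δ := 1 - e / (c * μ)
  have hcμ : e < c * μ := by rwa [div_lt_iff₀' hc] at hμ
  have hδ0 : 0 < δ := sub_pos.mpr ((div_lt_one (he.trans hcμ)).mpr hcμ)
  have hδ1 : δ ≤ 1 := sub_le_self _ (div_pos he (he.trans hcμ)).le
  have hδv : 0 ≤ δ • v := smul_nonneg hδ0.le hv
  have hδv1 : δ • v ≤ 1 := fun i => mul_le_one₀ hδ1 (hv i) (hv1 i)
  have hsub := smul_le_levinsMap_smul hc he hμ hδ0.le le_rfl hv hv1 hAv
  have hmono : MonotoneOn (levinsMap A c e) (Icc (δ • v) 1) :=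
    (levinsMap_monotoneOn hA hc he).mono fun x hx => hδv.trans hx.1
  have hmaps : MapsTo (levinsMap A c e) (Icc (δ • v) 1) (Icc (δ • v) 1) := fun x hx =>
    ⟨hsub.trans (hmono ⟨le_rfl, hδv1⟩ hx hx.1),
      fun i => (levinsMap_lt_one hA hc he (hδv.trans hx.1) i).le⟩
  obtain ⟨p, hp, hfix⟩ := exists_fixedPoint_of_mapsTo_Icc hδv1 hmono hmaps
  refine ⟨p, hδv.trans hp.1, ?_, hfix⟩
  rintro rfl
  exact hv0 ((smul_eq_zero.mp (le_antisymm hp.1 hδv)).resolve_left hδ0.ne')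

end levinsMap

theorem SimpleGraph.adjMatrix_apply_nonneg {V α : Type*} (G : SimpleGraph V) [DecidableRel G.Adj]
    [Zero α] [One α] [Preorder α] [ZeroLEOneClass α] (i j : V) : 0 ≤ G.adjMatrix α i j := by
  rw [adjMatrix_apply]
  split_ifs
  exacts [zero_le_one, le_rfl]

theorem SimpleGraph.Connected.pos_of_levinsMap_eq {V : Type*} [Fintype V] {G : SimpleGraph V}
    [DecidableRel G.Adj] (hG : G.Connected) {c e : ℝ} (hc : 0 < c) (he : 0 < e) {p : V → ℝ}
    (hp : 0 ≤ p) (hp0 : p ≠ 0) (hfix : levinsMap (G.adjMatrix ℝ) c e p = p) (i : V) :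
    0 < p i := by
  obtain ⟨j, hj⟩ := Function.ne_iff.mp hp0
  refine (hG.preconnected j i).of_forall_adj_imp (P := fun k => 0 < p k) (fun u v huv hu => ?_)
    ((hp j).lt_of_ne' hj)
  rw [← hfix]
  refine levinsResponse_pos hc he (hu.trans_le ?_)
  rw [adjMatrix_mulVec_apply]
  exact Finset.single_le_sum (fun k _ => hp k) ((G.mem_neighborFinset v u).mpr huv.symm)

theorem levins_metapopulation_threshold_general {n : ℕ}
    (G : SimpleGraph (Fin n)) [DecidableRel G.Adj] (hG : G.Connected)
    (c e : ℝ) (hc : c ∈ Set.Ioo (0:ℝ) 1) (he : e ∈ Set.Ioo (0:ℝ) 1) :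
    (∃ p : Fin n → ℝ, (∀ i, p i ∈ Set.Ioo (0:ℝ) 1) ∧
        ∀ i, c * ((G.adjMatrix ℝ).mulVec p) i * (1 - p i) = e * p i)
      ↔ e / c < sSup (spectrum ℝ (G.adjMatrix ℝ)) := by
  have : Nonempty (Fin n) := hG.nonempty
  have hA : (G.adjMatrix ℝ).IsHermitian := isHermitian_iff_isSymm.mpr G.isSymm_adjMatrix
  constructor
  · rintro ⟨p, hp, hequil⟩
    exact hA.lt_sSup_spectrum_of_forall_mul_lt_mulVec (fun i => (hp i).1)
      fun i => div_mul_lt_of_mul_one_sub_eq hc.1 he.1 (hp i) (hequil i)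
  · intro hΛ
    obtain ⟨w, hw0, hw⟩ := exists_mulVec_eq_smul_of_mem_spectrum hA.sSup_spectrum_mem_s15
    obtain ⟨v, hv, hv0, hv1, hAv⟩ := exists_nonneg_smul_le_mulVec G.adjMatrix_apply_nonneg
      ((div_pos he.1 hc.1).trans hΛ).le hw0 hw
    obtain ⟨p, hp, hp0, hfix⟩ :=
      exists_levinsMap_fixedPoint G.adjMatrix_apply_nonneg hc.1 he.1 hΛ hv hv0 hv1 hAv
    refine ⟨p, fun i => ⟨hG.pos_of_levinsMap_eq hc.1 he.1 hp hp0 hfix i, ?_⟩, fun i => ?_⟩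
    · exact hfix ▸ levinsMap_lt_one G.adjMatrix_apply_nonneg hc.1 he.1 hp i
    · exact mul_one_sub_eq_of_levinsResponse_eq hc.1 he.1
        (mulVec_nonneg_of_nonneg G.adjMatrix_apply_nonneg hp i) (congrFun hfix i)

/-- Spatially realistic Levins metapopulation model: for a connected simple graph on
`n ≥ 2` vertices with adjacency matrix `A`, a nontrivial equilibrium
`c (A p)_i (1 - p_i) = e p_i` with `p ∈ (0,1)^n` exists if and only if the
metapopulation capacity (the largest eigenvalue of `A`) exceeds `e/c`. -/
theorem levins_metapopulation_threshold {n : ℕ} (hn : 2 ≤ n)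
    (G : SimpleGraph (Fin n)) [DecidableRel G.Adj] (hG : G.Connected)
    (c e : ℝ) (hc : c ∈ Set.Ioo (0:ℝ) 1) (he : e ∈ Set.Ioo (0:ℝ) 1) :
    (∃ p : Fin n → ℝ, (∀ i, p i ∈ Set.Ioo (0:ℝ) 1) ∧
        ∀ i, c * ((G.adjMatrix ℝ).mulVec p) i * (1 - p i) = e * p i)
      ↔ e / c < sSup (spectrum ℝ (G.adjMatrix ℝ)) :=
  levins_metapopulation_threshold_general G hG c e hc he
end
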